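/- arXiv:2512.18106 — 9 statements merged into one kernel-verified Lean document; each statement's English description precedes it below -/
import Mathlib

section
/- Let f, g : ℝ → ℂ be smooth, 2π-periodic, nowhere-vanishing functions and let L₁, L₂ : ℝ → ℂ be two branches of log f on [0,2π]. Then exp((1/(2πi)) ∫₀^{2π} L₁(t)·g'(t)/g(t) dt) = exp((1/(2πi)) ∫₀^{2π} L₂(t)·g'(t)/g(t) dt); hence the Deligne–Beilinson pairing T(f,g) does not depend on the choice of the branch of log f. -/
open intervalIntegral MeasureTheory

/-- **Independence of the Deligne–Beilinson pairing from the branch of the logarithm.**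
If `f, g : ℝ → ℂ` are smooth, `2π`-periodic, nowhere-vanishing and `L₁, L₂` are two
branches of `log f` on `[0, 2π]`, then
`exp((1/(2πi)) ∫₀^{2π} L₁ g'/g) = exp((1/(2πi)) ∫₀^{2π} L₂ g'/g)`. -/
theorem pairing_indep_of_branch (f g : ℝ → ℂ)
    (hf : ContDiff ℝ (⊤ : ℕ∞) f) (hg : ContDiff ℝ (⊤ : ℕ∞) g)
    (hfper : ∀ t : ℝ, f (t + 2 * Real.pi) = f t)
    (hgper : ∀ t : ℝ, g (t + 2 * Real.pi) = g t)
    (hfne : ∀ t : ℝ, f t ≠ 0) (hgne : ∀ t : ℝ, g t ≠ 0)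
    (L₁ L₂ : ℝ → ℂ) (hL₁c : Continuous L₁) (hL₂c : Continuous L₂)
    (hL₁ : ∀ t ∈ Set.Icc (0:ℝ) (2 * Real.pi), Complex.exp (L₁ t) = f t)
    (hL₂ : ∀ t ∈ Set.Icc (0:ℝ) (2 * Real.pi), Complex.exp (L₂ t) = f t) :
    Complex.exp ((1 / (2 * (Real.pi : ℂ) * Complex.I)) *
        ∫ t in (0:ℝ)..(2 * Real.pi), L₁ t * (deriv g t / g t)) =
    Complex.exp ((1 / (2 * (Real.pi : ℂ) * Complex.I)) *
        ∫ t in (0:ℝ)..(2 * Real.pi), L₂ t * (deriv g t / g t)) := by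
  have hπ : (0:ℝ) < 2 * Real.pi := by positivity
  set w : ℝ → ℂ := fun t => deriv g t / g t with hw_def
  have hwcont : Continuous w := ((hg.continuous_deriv (by simp)).div hg.continuous hgne)
  -- the difference of the two branches
  set d : ℝ → ℂ := fun t => L₁ t - L₂ t with hd_def
  have hdint : ∀ t ∈ Set.Icc (0:ℝ) (2 * Real.pi), ∃ n : ℤ, d t = n * (2 * Real.pi * Complex.I) := by
    intro t ht
    have : Complex.exp (d t) = 1 := by
      rw [hd_def]; simp only [Complex.exp_sub, hL₁ t ht, hL₂ t ht]
      exact div_self (hfne t)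
    rcases Complex.exp_eq_one_iff.mp this with ⟨n, hn⟩
    exact ⟨n, hn⟩
  -- d is constant on Icc
  have hdconst : ∀ t ∈ Set.Icc (0:ℝ) (2 * Real.pi), d t = d 0 := by
    intro t ht
    have h0 : (0:ℝ) ∈ Set.Icc (0:ℝ) (2 * Real.pi) := ⟨le_refl _, le_of_lt hπ⟩
    have him : ∀ s ∈ Set.Icc (0:ℝ) (2 * Real.pi), (d s).im ∈ (AddSubgroup.zmultiples (2 * Real.pi) : Set ℝ) := by
      intro s hs
      rcases hdint s hs with ⟨n, hn⟩
      refine ⟨n, ?_⟩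
      simp only [zsmul_eq_mul]
      rw [hn]
      push_cast
      simp [Complex.mul_im, Complex.mul_re]
    have hre : ∀ s ∈ Set.Icc (0:ℝ) (2 * Real.pi), d s = ((d s).im : ℂ) * Complex.I := by
      intro s hs
      rcases hdint s hs with ⟨n, hn⟩
      rw [hn]
      have : ((n : ℂ) * (2 * Real.pi * Complex.I)).im = n * (2 * Real.pi) := by
        push_cast
        simp [Complex.mul_im, Complex.mul_re]
      rw [this]
      push_cast; ring
    haveI : DiscreteTopology ((AddSubgroup.zmultiples (2*Real.pi) : AddSubgroup ℝ) : Set ℝ) :=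
      inferInstanceAs (DiscreteTopology (AddSubgroup.zmultiples (2*Real.pi)))
    have hcon : IsPreconnected (Set.Icc (0:ℝ) (2 * Real.pi)) := isPreconnected_Icc
    have hcim : ContinuousOn (fun s => (d s).im) (Set.Icc (0:ℝ) (2 * Real.pi)) :=
      (Complex.continuous_im.comp (hL₁c.sub hL₂c)).continuousOn
    have heq : (d t).im = (d 0).im :=
      hcon.constant_of_mapsTo (isDiscrete_iff_discreteTopology.mpr inferInstance) hcim him ht h0
    rw [hre t ht, hre 0 h0, heq]
  obtain ⟨k, hk⟩ := hdint 0 ⟨le_refl _, le_of_lt hπ⟩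
  -- winding number of g
  set G : ℝ → ℂ := fun t => ∫ s in (0:ℝ)..t, w s with hG_def
  have hGderiv : ∀ t, HasDerivAt G (w t) t := fun t =>
    (hwcont.integral_hasStrictDerivAt 0 t).hasDerivAt
  set h : ℝ → ℂ := fun t => g t * Complex.exp (-G t) with hh_def
  have hhderiv : ∀ t, HasDerivAt h 0 t := by
    intro t
    have h1 : HasDerivAt g (deriv g t) t :=
      (hg.differentiable (by simp) t).hasDerivAt
    have h2 : HasDerivAt (fun t => Complex.exp (-G t)) (Complex.exp (-G t) * (-(w t))) t :=
      ((hGderiv t).neg.cexp)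
    have : HasDerivAt h (deriv g t * Complex.exp (-G t) + g t * (Complex.exp (-G t) * -w t)) t := h1.mul h2
    convert this using 1
    rw [hw_def]
    field_simp [hgne t]
    ring
  have hconst : h (2 * Real.pi) = h 0 :=
    is_const_of_deriv_eq_zero (fun t => (hhderiv t).differentiableAt)
      (fun t => (hhderiv t).deriv) _ _
  have hg2π : g (2 * Real.pi) = g 0 := by
    have := hgper 0; rwa [zero_add] at this
  have hG0 : G 0 = 0 := by simp [hG_def]
  have hexpG : Complex.exp (G (2 * Real.pi)) = 1 := by
    rw [hh_def] at hconst
    simp only [hG0, neg_zero, Complex.exp_zero, mul_one, hg2π] at hconst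
    nth_rewrite 2 [← mul_one (g 0)] at hconst
    have := mul_left_cancel₀ (hgne 0) hconst
    rwa [Complex.exp_neg, inv_eq_one] at this
  obtain ⟨m, hm⟩ := Complex.exp_eq_one_iff.mp hexpG
  -- the integrals
  have hInt1 : IntervalIntegrable (fun t => L₁ t * w t) volume 0 (2 * Real.pi) :=
    (hL₁c.mul hwcont).intervalIntegrable _ _
  have hInt2 : IntervalIntegrable (fun t => L₂ t * w t) volume 0 (2 * Real.pi) :=
    (hL₂c.mul hwcont).intervalIntegrable _ _
  have hdiff : (∫ t in (0:ℝ)..(2 * Real.pi), L₁ t * w t) -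
      (∫ t in (0:ℝ)..(2 * Real.pi), L₂ t * w t) = d 0 * G (2 * Real.pi) := by
    rw [← intervalIntegral.integral_sub hInt1 hInt2]
    have : ∫ t in (0:ℝ)..(2 * Real.pi), (L₁ t * w t - L₂ t * w t) =
        ∫ t in (0:ℝ)..(2 * Real.pi), d 0 * w t := by
      apply intervalIntegral.integral_congr
      intro t ht
      rw [Set.uIcc_of_le (le_of_lt hπ)] at ht
      rw [← hdconst t ht, hd_def]
      ring
    rw [this, intervalIntegral.integral_const_mul, hG_def]
  rw [Complex.exp_eq_exp_iff_exists_int]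
  refine ⟨k * m, ?_⟩
  have h2πI : (2 * (Real.pi:ℂ) * Complex.I) ≠ 0 := by
    simp [Real.pi_ne_zero, Complex.I_ne_zero]
  have : (1 / (2 * (Real.pi : ℂ) * Complex.I)) *
      ((∫ t in (0:ℝ)..(2 * Real.pi), L₁ t * w t) - (∫ t in (0:ℝ)..(2 * Real.pi), L₂ t * w t)) =
      (k * m : ℤ) * (2 * Real.pi * Complex.I) := by
    rw [hdiff, hk, hm]
    field_simp
    push_cast
    ring
  rw [mul_sub] at this
  linear_combination this
end

section
/- Let f, g : ℝ → ℂ be smooth, 2π-periodic, nowhere-vanishing functions, let m ∈ ℤ satisfy ∫₀^{2π} f'(t)/f(t) dt = 2πi·m, let s ∈ ℝ, let L₀ : ℝ → ℂ be continuous with exp(L₀(t)) = f(t) for all t ∈ [0,2π], and let Lₛ : ℝ → ℂ be continuous with exp(Lₛ(t)) = f(t) for all t ∈ [s, s+2π]. Then exp((1/(2πi)) ∫ₛ^{s+2π} Lₛ(t)·g'(t)/g(t) dt) · g(s)^{−m} = exp((1/(2πi)) ∫₀^{2π} L₀(t)·g'(t)/g(t) dt) · g(0)^{−m}; hence the Deligne–Beilinson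 pairing T(f,g) does not depend on the choice of the base point on the circle. -/
open intervalIntegral

private lemma hasDerivAt_primitive' {φ : ℝ → ℂ} (hφ : Continuous φ) (a x : ℝ) :
    HasDerivAt (fun y => ∫ u in a..y, φ u) (φ x) x :=
  intervalIntegral.integral_hasDerivAt_right (hφ.intervalIntegrable a x)
    (hφ.stronglyMeasurable.stronglyMeasurableAtFilter) hφ.continuousAt

private lemma exp_primitive' {f : ℝ → ℂ} (hf : ContDiff ℝ (⊤ : ℕ∞) f) (hfne : ∀ t, f t ≠ 0)
    (a : ℝ) {z : ℂ} (hz : Complex.exp z = f a) (t : ℝ) :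
    Complex.exp (z + ∫ u in a..t, deriv f u / f u) = f t := by
  set φ : ℝ → ℂ := fun u => deriv f u / f u with hφdef
  have hφ : Continuous φ := (hf.continuous_deriv (by simp)).div hf.continuous hfne
  set L : ℝ → ℂ := fun y => z + ∫ u in a..y, φ u with hLdef
  have hLd : ∀ x, HasDerivAt L (φ x) x := fun x =>
    (hasDerivAt_primitive' hφ a x).const_add z
  have hfd : ∀ x, HasDerivAt f (deriv f x) x := fun x =>
    (hf.differentiable (by simp) x).hasDerivAt
  set F : ℝ → ℂ := fun x => f x * Complex.exp (-(L x)) with hFdef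
  have hFd : ∀ x, HasDerivAt F 0 x := by
    intro x
    have h1 : HasDerivAt (fun y => Complex.exp (-(L y)))
        (Complex.exp (-(L x)) * (-(φ x))) x := ((hLd x).neg).cexp
    have h2 := (hfd x).mul h1
    refine h2.congr_deriv ?_
    have hne := hfne x
    field_simp [hφdef]
    simp only [hφdef]
    field_simp
    ring
  have hconst : ∀ x, F x = F a := fun x =>
    is_const_of_deriv_eq_zero (fun y => (hFd y).differentiableAt) (fun y => (hFd y).deriv) x a
  have hFa : F a = 1 := by
    simp only [hFdef, hLdef, intervalIntegral.integral_same, add_zero, ← hz,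
      ← Complex.exp_add]
    simp
  have hFt : f t * Complex.exp (-(L t)) = 1 := (hconst t).trans hFa
  have : f t * (Complex.exp (L t))⁻¹ = 1 := by
    rwa [Complex.exp_neg] at hFt
  have := (mul_inv_eq_one₀ (Complex.exp_ne_zero _)).mp this
  simpa [hLdef] using this.symm

private lemma branch_const' {a b : ℝ} (D : ℝ → ℂ) (hD : Continuous D)
    (h1 : ∀ t ∈ Set.Icc a b, Complex.exp (D t) = 1) :
    ∀ t ∈ Set.Icc a b, D t = D a := by
  intro t ht
  have hab : a ≤ b := le_trans ht.1 ht.2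
  have ha : a ∈ Set.Icc a b := ⟨le_rfl, hab⟩
  obtain ⟨n₀, hn₀⟩ := Complex.exp_eq_one_iff.mp (h1 a ha)
  obtain ⟨n₁, hn₁⟩ := Complex.exp_eq_one_iff.mp (h1 t ht)
  suffices hn : n₁ = n₀ by rw [hn₀, hn₁, hn]
  by_contra hne
  have hπ := Real.pi_pos
  set u : ℝ → ℝ := fun x => (D x).im / (2 * Real.pi) with hu
  have hucont : ContinuousOn u (Set.uIcc a t) :=
    ((Complex.continuous_im.comp hD).div_const _).continuousOn
  have hval : ∀ x ∈ Set.Icc a b, ∃ k : ℤ, u x = k := by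
    intro x hx
    obtain ⟨k, hk⟩ := Complex.exp_eq_one_iff.mp (h1 x hx)
    refine ⟨k, ?_⟩
    simp only [hu, hk]
    have him : ((k : ℂ) * (2 * (Real.pi : ℂ) * Complex.I)).im = k * (2 * Real.pi) := by
      simp [Complex.mul_im]
    rw [him]
    field_simp
  have hua : u a = n₀ := by
    simp only [hu, hn₀]
    have him : ((n₀ : ℂ) * (2 * (Real.pi : ℂ) * Complex.I)).im = n₀ * (2 * Real.pi) := by
      simp [Complex.mul_im]
    rw [him]; field_simp
  have hut : u t = n₁ := by
    simp only [hu, hn₁]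
    have him : ((n₁ : ℂ) * (2 * (Real.pi : ℂ) * Complex.I)).im = n₁ * (2 * Real.pi) := by
      simp [Complex.mul_im]
    rw [him]; field_simp
  set p : ℤ := min n₀ n₁ with hp
  have hmem : ((p : ℝ) + 1/2) ∈ Set.uIcc (u a) (u t) := by
    rw [hua, hut, Set.mem_uIcc]
    rcases le_or_gt n₀ n₁ with h | h
    · have h' : n₀ < n₁ := lt_of_le_of_ne h (fun hh => hne hh.symm)
      left
      have : p = n₀ := min_eq_left h
      constructor
      · rw [this]; linarith
      · rw [this]
        have : (n₀ : ℝ) + 1 ≤ n₁ := by exact_mod_cast h'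
        linarith
    · right
      have : p = n₁ := min_eq_right h.le
      constructor
      · rw [this]; linarith
      · rw [this]
        have : (n₁ : ℝ) + 1 ≤ n₀ := by exact_mod_cast h
        linarith
  obtain ⟨x, hx, hux⟩ := intermediate_value_uIcc hucont hmem
  have hxIcc : x ∈ Set.Icc a b := by
    have hsub : Set.uIcc a t ⊆ Set.Icc a b := by
      rw [Set.uIcc_of_le ht.1]
      exact Set.Icc_subset_Icc le_rfl ht.2
    exact hsub hx
  obtain ⟨k, hk⟩ := hval x hxIcc
  rw [hk] at hux
  have h1' : (p : ℝ) < k := by rw [hux]; linarith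
  have h2' : (k : ℝ) < p + 1 := by rw [hux]; linarith
  have h1'' : p < k := by exact_mod_cast h1'
  have h2'' : k < p + 1 := by exact_mod_cast h2'
  omega

/-- **Independence of the Deligne–Beilinson pairing from the base point.**
For smooth, `2π`-periodic, nowhere-vanishing `f, g : ℝ → ℂ` with winding number `m`,
a branch `L₀` of `log f` on `[0, 2π]`, a base point `s` and a branch `Lₛ` of `log f`
on `[s, s + 2π]`, the value of the Deligne–Beilinson pairing computed with base
point `s` equals the one computed with base point `0`. -/
theorem pairing_indep_of_base_point (f g : ℝ → ℂ)
    (hf : ContDiff ℝ (⊤ : ℕ∞) f) (hg : ContDiff ℝ (⊤ : ℕ∞) g)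
    (hfper : ∀ t : ℝ, f (t + 2 * Real.pi) = f t)
    (hgper : ∀ t : ℝ, g (t + 2 * Real.pi) = g t)
    (hfne : ∀ t : ℝ, f t ≠ 0) (hgne : ∀ t : ℝ, g t ≠ 0)
    (m : ℤ)
    (hm : ∫ t in (0:ℝ)..(2 * Real.pi), deriv f t / f t
      = 2 * (Real.pi : ℂ) * Complex.I * (m : ℂ))
    (s : ℝ)
    (L₀ Lₛ : ℝ → ℂ) (hL₀c : Continuous L₀) (hLₛc : Continuous Lₛ)
    (hL₀ : ∀ t ∈ Set.Icc (0:ℝ) (2 * Real.pi), Complex.exp (L₀ t) = f t)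
    (hLₛ : ∀ t ∈ Set.Icc s (s + 2 * Real.pi), Complex.exp (Lₛ t) = f t) :
    Complex.exp ((1 / (2 * (Real.pi : ℂ) * Complex.I)) *
        ∫ t in s..(s + 2 * Real.pi), Lₛ t * (deriv g t / g t)) * g s ^ (-m) =
    Complex.exp ((1 / (2 * (Real.pi : ℂ) * Complex.I)) *
        ∫ t in (0:ℝ)..(2 * Real.pi), L₀ t * (deriv g t / g t)) * g 0 ^ (-m) := by
  have hπ : (0:ℝ) < Real.pi := Real.pi_pos
  have h2π : (0:ℝ) < 2 * Real.pi := by linarith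
  have h2πi : (2 * (Real.pi : ℂ) * Complex.I) ≠ 0 := by
    simp [Real.pi_ne_zero, Complex.I_ne_zero]
  set φf : ℝ → ℂ := fun t => deriv f t / f t with hφf
  set φg : ℝ → ℂ := fun t => deriv g t / g t with hφg
  have hφfc : Continuous φf := (hf.continuous_deriv (by simp)).div hf.continuous hfne
  have hφgc : Continuous φg := (hg.continuous_deriv (by simp)).div hg.continuous hgne
  have hφfP : ∀ t, φf (t + 2 * Real.pi) = φf t := by
    intro t
    have hd : deriv f (t + 2 * Real.pi) = deriv f t := by
      conv_rhs => rw [show f = fun x => f (x + 2 * Real.pi) from funext fun x => (hfper x).symm]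
      rw [deriv_comp_add_const]
    simp only [hφf, hd, hfper t]
  have hφgP : ∀ t, φg (t + 2 * Real.pi) = φg t := by
    intro t
    have hd : deriv g (t + 2 * Real.pi) = deriv g t := by
      conv_rhs => rw [show g = fun x => g (x + 2 * Real.pi) from funext fun x => (hgper x).symm]
      rw [deriv_comp_add_const]
    simp only [hφg, hd, hgper t]
  -- canonical branch of log f
  set L : ℝ → ℂ := fun t => L₀ 0 + ∫ u in (0:ℝ)..t, φf u with hLdef
  have hLexp : ∀ t, Complex.exp (L t) = f t := fun t =>
    exp_primitive' hf hfne 0 (hL₀ 0 ⟨le_rfl, h2π.le⟩) t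
  have hLd : ∀ x, HasDerivAt L (φf x) x := fun x =>
    (hasDerivAt_primitive' hφfc 0 x).const_add _
  have hLc : Continuous L := continuous_iff_continuousAt.mpr fun x => (hLd x).continuousAt
  have hLshift : ∀ t, L (t + 2 * Real.pi) = L t + 2 * (Real.pi : ℂ) * Complex.I * m := by
    intro t
    have hsum : (∫ u in (0:ℝ)..(t + 2 * Real.pi), φf u)
        = (∫ u in (0:ℝ)..t, φf u) + ∫ u in t..(t + 2 * Real.pi), φf u :=
      (intervalIntegral.integral_add_adjacent_intervals
        (hφfc.intervalIntegrable _ _) (hφfc.intervalIntegrable _ _)).symm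
    have h2 : (∫ u in t..(t + 2 * Real.pi), φf u) = ∫ u in (0:ℝ)..(2 * Real.pi), φf u := by
      have := (Function.Periodic.intervalIntegral_add_eq (f := φf)
        (T := 2 * Real.pi) hφfP t 0)
      simpa using this
    simp only [hLdef]
    rw [hsum, h2, hm]
    ring
  -- canonical branch of log g
  set Λ : ℝ → ℂ := fun t => Complex.log (g 0) + ∫ u in (0:ℝ)..t, φg u with hΛdef
  have hΛexp : ∀ t, Complex.exp (Λ t) = g t := fun t =>
    exp_primitive' hg hgne 0 (Complex.exp_log (hgne 0)) t
  have hΛd : ∀ x, HasDerivAt Λ (φg x) x := fun x =>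
    (hasDerivAt_primitive' hφgc 0 x).const_add _
  -- winding number of g
  obtain ⟨n, hn⟩ : ∃ n : ℤ,
      (∫ u in (0:ℝ)..(2 * Real.pi), φg u) = n * (2 * (Real.pi : ℂ) * Complex.I) := by
    apply Complex.exp_eq_one_iff.mp
    have h1 : Complex.exp (Λ (2 * Real.pi) - Λ 0) = 1 := by
      rw [Complex.exp_sub, hΛexp, hΛexp]
      have : g (2 * Real.pi) = g 0 := by simpa using hgper 0
      rw [this, div_self (hgne 0)]
    have h2 : Λ (2 * Real.pi) - Λ 0 = ∫ u in (0:ℝ)..(2 * Real.pi), φg u := by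
      simp [hΛdef]
    rwa [h2] at h1
  -- constant function K
  set FΛ : ℝ → ℂ := fun t => L t * φg t with hFΛ
  have hFΛc : Continuous FΛ := hLc.mul hφgc
  set G : ℝ → ℂ := fun x => ∫ u in (0:ℝ)..x, FΛ u with hG
  set K : ℝ → ℂ := fun x =>
    (1 / (2 * (Real.pi : ℂ) * Complex.I)) * (G (x + 2 * Real.pi) - G x) - m * Λ x with hK
  have hKd : ∀ x, HasDerivAt K 0 x := by
    intro x
    have h1 : HasDerivAt G (FΛ x) x := hasDerivAt_primitive' hFΛc 0 x
    have h2 : HasDerivAt (fun y => G (y + 2 * Real.pi)) (FΛ (x + 2 * Real.pi)) x := by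
      exact HasDerivAt.comp_add_const x (2 * Real.pi)
        (hasDerivAt_primitive' hFΛc 0 (x + 2 * Real.pi))
    have h3 := ((h2.sub h1).const_mul (1 / (2 * (Real.pi : ℂ) * Complex.I))).sub
      ((hΛd x).const_mul (m : ℂ))
    refine h3.congr_deriv ?_
    have hshift : FΛ (x + 2 * Real.pi) = FΛ x + 2 * (Real.pi : ℂ) * Complex.I * m * φg x := by
      simp only [hFΛ]
      rw [hLshift x, hφgP x]
      ring
    rw [hshift]
    field_simp
    ring
  have hKconst : ∀ x, K x = K 0 := fun x =>
    is_const_of_deriv_eq_zero (fun y => (hKd y).differentiableAt) (fun y => (hKd y).deriv) x 0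
  -- value with the canonical branch
  have key : ∀ x : ℝ,
      Complex.exp ((1 / (2 * (Real.pi : ℂ) * Complex.I)) *
        ∫ t in x..(x + 2 * Real.pi), L t * φg t) * g x ^ (-m) = Complex.exp (K 0) := by
    intro x
    have hint : (∫ t in x..(x + 2 * Real.pi), L t * φg t) = G (x + 2 * Real.pi) - G x := by
      simp only [hG]
      exact (intervalIntegral.integral_interval_sub_left
        (hFΛc.intervalIntegrable _ _) (hFΛc.intervalIntegrable _ _)).symm
    rw [hint, ← hKconst x, hK]
    simp only
    rw [Complex.exp_sub]
    have hgm : Complex.exp ((m : ℂ) * Λ x) = g x ^ m := by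
      rw [Complex.exp_int_mul, hΛexp]
    rw [hgm, zpow_neg, div_eq_mul_inv]
    ring_nf
  -- value with an arbitrary branch on [a, a+2π]
  have branch : ∀ (a : ℝ) (Lb : ℝ → ℂ), Continuous Lb →
      (∀ t ∈ Set.Icc a (a + 2 * Real.pi), Complex.exp (Lb t) = f t) →
      Complex.exp ((1 / (2 * (Real.pi : ℂ) * Complex.I)) *
        ∫ t in a..(a + 2 * Real.pi), Lb t * φg t) * g a ^ (-m) = Complex.exp (K 0) := by
    intro a Lb hLbc hLb
    set D : ℝ → ℂ := fun t => Lb t - L t with hD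
    have hDc : Continuous D := hLbc.sub hLc
    have hD1 : ∀ t ∈ Set.Icc a (a + 2 * Real.pi), Complex.exp (D t) = 1 := by
      intro t ht
      simp only [hD]
      rw [Complex.exp_sub, hLb t ht, hLexp t, div_self (hfne t)]
    have hDconst := branch_const' D hDc hD1
    have hsplit : (∫ t in a..(a + 2 * Real.pi), Lb t * φg t)
        = (∫ t in a..(a + 2 * Real.pi), L t * φg t)
          + D a * ∫ t in a..(a + 2 * Real.pi), φg t := by
      rw [← intervalIntegral.integral_const_mul,
        ← intervalIntegral.integral_add (hFΛc.intervalIntegrable _ _)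
          (by exact (continuous_const.mul hφgc).intervalIntegrable _ _ :
            IntervalIntegrable (fun t => D a * φg t) MeasureTheory.volume a (a + 2 * Real.pi))]
      apply intervalIntegral.integral_congr
      intro t ht
      rw [Set.uIcc_of_le (by linarith : a ≤ a + 2 * Real.pi)] at ht
      have hDt := hDconst t ht
      have hLbt : Lb t - L t = D a := by simpa [hD] using hDt
      show Lb t * φg t = L t * φg t + D a * φg t
      linear_combination φg t * hLbt
    have hper : (∫ t in a..(a + 2 * Real.pi), φg t)
        = n * (2 * (Real.pi : ℂ) * Complex.I) := by
      have := (Function.Periodic.intervalIntegral_add_eq (f := φg)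
        (T := 2 * Real.pi) hφgP a 0)
      simp only [zero_add] at this
      rw [this, hn]
    obtain ⟨k, hk⟩ := Complex.exp_eq_one_iff.mp (hD1 a ⟨le_rfl, by linarith⟩)
    rw [hsplit, hper, mul_add, Complex.exp_add]
    have hone : Complex.exp ((1 / (2 * (Real.pi : ℂ) * Complex.I)) *
        (D a * ((n : ℂ) * (2 * (Real.pi : ℂ) * Complex.I)))) = 1 := by
      have harg : (1 / (2 * (Real.pi : ℂ) * Complex.I)) *
          (D a * ((n : ℂ) * (2 * (Real.pi : ℂ) * Complex.I)))
          = ((k * n : ℤ) : ℂ) * (2 * (Real.pi : ℂ) * Complex.I) := by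
        rw [hk]
        push_cast
        field_simp
      rw [harg, Complex.exp_int_mul_two_pi_mul_I]
    rw [hone, mul_one]
    exact key a
  have h1 := branch s Lₛ hLₛc hLₛ
  have h2 := branch 0 L₀ hL₀c (by simpa using hL₀)
  simp only [zero_add] at h2
  rw [h1, h2]
end

section
/- Let f₁, f₂, g : ℝ → ℂ be smooth, 2π-periodic, nowhere-vanishing functions, let L₁, L₂ : ℝ → ℂ be branches of log f₁ and log f₂ on [0,2π] respectively, and let m₁, m₂ ∈ ℤ satisfy ∫₀^{2π} fⱼ'(t)/fⱼ(t) dt = 2πi·mⱼ for j = 1, 2. Then ∫₀^{2π} (f₁f₂)'(t)/(f₁f₂)(t) dt = 2πi·(m₁+m₂), L₁+L₂ is a branch of log(f₁f₂) on [0,2π], and exp((1/(2πi)) ∫₀^{2π} (L₁(t)+L₂(t))·g'(t)/g(t) dt) · g(0)^{−(m₁+m₂)} = [exp((1/(2πi)) ∫₀^{2π} L₁(t)·g'(t)/g(t) dt) · g(0)^{−m₁}] · [exp((1/(2πi)) ∫₀^{2π} L₂(t)·g'(t)/g(t) dt) · g(0)^{−m₂}]; that is, the Deligne–Beilinson pairing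 is multiplicative in the first argument: T(f₁f₂, g) = T(f₁,g)·T(f₂,g). -/
/-- **Multiplicativity of the Deligne–Beilinson pairing in the first argument:**
`T(f₁f₂, g) = T(f₁,g)·T(f₂,g)`. Moreover the winding number of `f₁f₂` is `m₁ + m₂`
and `L₁ + L₂` is a branch of `log (f₁ f₂)` on `[0, 2π]`. -/
theorem pairing_multiplicative_first (f₁ f₂ g : ℝ → ℂ)
    (hf₁ : ContDiff ℝ (⊤ : ℕ∞) f₁) (hf₂ : ContDiff ℝ (⊤ : ℕ∞) f₂) (hg : ContDiff ℝ (⊤ : ℕ∞) g)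
    (hf₁per : ∀ t : ℝ, f₁ (t + 2 * Real.pi) = f₁ t)
    (hf₂per : ∀ t : ℝ, f₂ (t + 2 * Real.pi) = f₂ t)
    (hgper : ∀ t : ℝ, g (t + 2 * Real.pi) = g t)
    (hf₁ne : ∀ t : ℝ, f₁ t ≠ 0) (hf₂ne : ∀ t : ℝ, f₂ t ≠ 0) (hgne : ∀ t : ℝ, g t ≠ 0)
    (L₁ L₂ : ℝ → ℂ) (hL₁c : Continuous L₁) (hL₂c : Continuous L₂)
    (hL₁ : ∀ t ∈ Set.Icc (0:ℝ) (2 * Real.pi), Complex.exp (L₁ t) = f₁ t)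
    (hL₂ : ∀ t ∈ Set.Icc (0:ℝ) (2 * Real.pi), Complex.exp (L₂ t) = f₂ t)
    (m₁ m₂ : ℤ)
    (hm₁ : ∫ t in (0:ℝ)..(2 * Real.pi), deriv f₁ t / f₁ t
      = 2 * (Real.pi : ℂ) * Complex.I * (m₁ : ℂ))
    (hm₂ : ∫ t in (0:ℝ)..(2 * Real.pi), deriv f₂ t / f₂ t
      = 2 * (Real.pi : ℂ) * Complex.I * (m₂ : ℂ)) :
    (∫ t in (0:ℝ)..(2 * Real.pi), deriv (fun t => f₁ t * f₂ t) t / (f₁ t * f₂ t)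
        = 2 * (Real.pi : ℂ) * Complex.I * ((m₁ + m₂ : ℤ) : ℂ))
    ∧ (Continuous (fun t => L₁ t + L₂ t)
        ∧ ∀ t ∈ Set.Icc (0:ℝ) (2 * Real.pi),
            Complex.exp (L₁ t + L₂ t) = f₁ t * f₂ t)
    ∧ Complex.exp ((1 / (2 * (Real.pi : ℂ) * Complex.I)) *
          ∫ t in (0:ℝ)..(2 * Real.pi), (L₁ t + L₂ t) * (deriv g t / g t))
        * g 0 ^ (-(m₁ + m₂))
      = (Complex.exp ((1 / (2 * (Real.pi : ℂ) * Complex.I)) *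
            ∫ t in (0:ℝ)..(2 * Real.pi), L₁ t * (deriv g t / g t)) * g 0 ^ (-m₁))
        * (Complex.exp ((1 / (2 * (Real.pi : ℂ) * Complex.I)) *
            ∫ t in (0:ℝ)..(2 * Real.pi), L₂ t * (deriv g t / g t)) * g 0 ^ (-m₂)) := by
  have hd₁ : Differentiable ℝ f₁ := hf₁.differentiable (by simp)
  have hd₂ : Differentiable ℝ f₂ := hf₂.differentiable (by simp)
  have hc₁ : Continuous (fun t => deriv f₁ t / f₁ t) :=
    (hf₁.continuous_deriv (by simp)).div hf₁.continuous hf₁ne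
  have hc₂ : Continuous (fun t => deriv f₂ t / f₂ t) :=
    (hf₂.continuous_deriv (by simp)).div hf₂.continuous hf₂ne
  have hgc : Continuous (fun t => deriv g t / g t) :=
    (hg.continuous_deriv (by simp)).div hg.continuous hgne
  refine ⟨?_, ⟨hL₁c.add hL₂c, fun t ht => by
    rw [Complex.exp_add, hL₁ t ht, hL₂ t ht]⟩, ?_⟩
  · have key : ∀ t : ℝ, deriv (fun t => f₁ t * f₂ t) t / (f₁ t * f₂ t)
        = deriv f₁ t / f₁ t + deriv f₂ t / f₂ t := by
      intro t
      have h1 := hf₁ne t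
      have h2 := hf₂ne t
      rw [deriv_fun_mul (hd₁ t) (hd₂ t)]
      field_simp
    rw [intervalIntegral.integral_congr (fun t _ => key t),
      intervalIntegral.integral_add (hc₁.intervalIntegrable _ _)
        (hc₂.intervalIntegrable _ _), hm₁, hm₂]
    push_cast
    ring
  · have h1 : IntervalIntegrable (fun t => L₁ t * (deriv g t / g t))
        MeasureTheory.volume 0 (2 * Real.pi) :=
      (hL₁c.mul hgc).intervalIntegrable _ _
    have h2 : IntervalIntegrable (fun t => L₂ t * (deriv g t / g t))
        MeasureTheory.volume 0 (2 * Real.pi) :=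
      (hL₂c.mul hgc).intervalIntegrable _ _
    have : (∫ t in (0:ℝ)..(2 * Real.pi), (L₁ t + L₂ t) * (deriv g t / g t))
        = (∫ t in (0:ℝ)..(2 * Real.pi), L₁ t * (deriv g t / g t))
          + ∫ t in (0:ℝ)..(2 * Real.pi), L₂ t * (deriv g t / g t) := by
      rw [← intervalIntegral.integral_add h1 h2]
      exact intervalIntegral.integral_congr (fun t _ => by ring)
    rw [this, mul_add, Complex.exp_add, neg_add, zpow_add₀ (hgne 0)]
    ring
end

section
/- Let f, g₁, g₂ : ℝ → ℂ be smooth, 2π-periodic, nowhere-vanishing functions, let L : ℝ → ℂ be a branch of log f on [0,2π], and let m ∈ ℤ satisfy ∫₀^{2π} f'(t)/f(t) dt = 2πi·m. Then exp((1/(2πi)) ∫₀^{2π} L(t)·(g₁g₂)'(t)/(g₁g₂)(t) dt) · (g₁(0)g₂(0))^{−m} = [exp((1/(2πi)) ∫₀^{2π} L(t)·g₁'(t)/g₁(t) dt) · g₁(0)^{−m}] · [exp((1/(2πi)) ∫₀^{2π} L(t)·g₂'(t)/g₂(t) dt) · g₂(0)^{−m}]; that is, the Deligne–Beilinson pairing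 is multiplicative in the second argument: T(f, g₁g₂) = T(f,g₁)·T(f,g₂). -/
/-- **Multiplicativity of the Deligne–Beilinson pairing in the second argument:**
`T(f, g₁g₂) = T(f,g₁)·T(f,g₂)`. -/
theorem pairing_multiplicative_second (f g₁ g₂ : ℝ → ℂ)
    (hf : ContDiff ℝ (⊤ : ℕ∞) f) (hg₁ : ContDiff ℝ (⊤ : ℕ∞) g₁) (hg₂ : ContDiff ℝ (⊤ : ℕ∞) g₂)
    (hfper : ∀ t : ℝ, f (t + 2 * Real.pi) = f t)
    (hg₁per : ∀ t : ℝ, g₁ (t + 2 * Real.pi) = g₁ t)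
    (hg₂per : ∀ t : ℝ, g₂ (t + 2 * Real.pi) = g₂ t)
    (hfne : ∀ t : ℝ, f t ≠ 0) (hg₁ne : ∀ t : ℝ, g₁ t ≠ 0) (hg₂ne : ∀ t : ℝ, g₂ t ≠ 0)
    (L : ℝ → ℂ) (hLc : Continuous L)
    (hL : ∀ t ∈ Set.Icc (0:ℝ) (2 * Real.pi), Complex.exp (L t) = f t)
    (m : ℤ)
    (hm : ∫ t in (0:ℝ)..(2 * Real.pi), deriv f t / f t
      = 2 * (Real.pi : ℂ) * Complex.I * (m : ℂ)) :
    Complex.exp ((1 / (2 * (Real.pi : ℂ) * Complex.I)) *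
        ∫ t in (0:ℝ)..(2 * Real.pi),
          L t * (deriv (fun t => g₁ t * g₂ t) t / (g₁ t * g₂ t)))
      * (g₁ 0 * g₂ 0) ^ (-m)
    = (Complex.exp ((1 / (2 * (Real.pi : ℂ) * Complex.I)) *
          ∫ t in (0:ℝ)..(2 * Real.pi), L t * (deriv g₁ t / g₁ t)) * g₁ 0 ^ (-m))
      * (Complex.exp ((1 / (2 * (Real.pi : ℂ) * Complex.I)) *
          ∫ t in (0:ℝ)..(2 * Real.pi), L t * (deriv g₂ t / g₂ t)) * g₂ 0 ^ (-m)) := by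
  have hd₁ : Differentiable ℝ g₁ := hg₁.differentiable (by simp)
  have hd₂ : Differentiable ℝ g₂ := hg₂.differentiable (by simp)
  have hkey : ∀ t : ℝ, L t * (deriv (fun t => g₁ t * g₂ t) t / (g₁ t * g₂ t))
      = L t * (deriv g₁ t / g₁ t) + L t * (deriv g₂ t / g₂ t) := by
    intro t
    rw [deriv_fun_mul (hd₁ t) (hd₂ t), add_div, mul_div_mul_right _ _ (hg₂ne t),
      mul_div_mul_left _ _ (hg₁ne t), mul_add]
  have hc₁ : Continuous fun t => L t * (deriv g₁ t / g₁ t) :=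
    hLc.mul ((hg₁.continuous_deriv (by simp)).div hg₁.continuous hg₁ne)
  have hc₂ : Continuous fun t => L t * (deriv g₂ t / g₂ t) :=
    hLc.mul ((hg₂.continuous_deriv (by simp)).div hg₂.continuous hg₂ne)
  have hint : (∫ t in (0:ℝ)..(2 * Real.pi),
        L t * (deriv (fun t => g₁ t * g₂ t) t / (g₁ t * g₂ t)))
      = (∫ t in (0:ℝ)..(2 * Real.pi), L t * (deriv g₁ t / g₁ t))
        + ∫ t in (0:ℝ)..(2 * Real.pi), L t * (deriv g₂ t / g₂ t) := by
    rw [← intervalIntegral.integral_add (hc₁.intervalIntegrable _ _)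
      (hc₂.intervalIntegrable _ _)]
    exact intervalIntegral.integral_congr fun t _ => hkey t
  rw [hint, mul_add, Complex.exp_add, mul_zpow]
  ring
end

section
/- Let F : ℂ → ℂ be continuous on the closed unit disk {z : |z| ≤ 1}, complex-differentiable on the open unit disk {z : |z| < 1}, and nonvanishing on the closed unit disk. Set f(t) := F(exp(i·t)) for t ∈ ℝ and assume f is continuously differentiable. Then ∫₀^{2π} f'(t)/f(t) dt = 0; that is, a nowhere-vanishing function on the closed unit disk that is holomorphic on the interior has winding number zero along the boundary circle. -/
open Complex Metric Set intervalIntegral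

/-- **A nowhere-vanishing function on the closed unit disk that is holomorphic on the
interior has winding number zero along the boundary circle:** `∫₀^{2π} f'(t)/f(t) dt = 0`
for `f(t) = F(exp(i t))`. -/
theorem winding_zero_of_holomorphic_on_disk (F : ℂ → ℂ)
    (hFcont : ContinuousOn F (Metric.closedBall 0 1))
    (hFdiff : DifferentiableOn ℂ F (Metric.ball 0 1))
    (hFne : ∀ z ∈ Metric.closedBall (0:ℂ) 1, F z ≠ 0)
    (f : ℝ → ℂ)
    (hfdef : ∀ t : ℝ, f t = F (Complex.exp (Complex.I * t)))
    (hf : ContDiff ℝ 1 f) :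
    ∫ t in (0:ℝ)..(2 * Real.pi), deriv f t / f t = 0 := by
  -- minimum modulus of `F` on the closed disk
  obtain ⟨z₀, hz₀, hz₀min⟩ := (isCompact_closedBall (0:ℂ) 1).exists_isMinOn
    ⟨0, by simp⟩ hFcont.norm
  set ε := ‖F z₀‖ with hεdef
  have hεpos : 0 < ε := norm_pos_iff.2 (hFne z₀ hz₀)
  -- uniform continuity gives δ
  obtain ⟨δ, hδpos, hδ⟩ := Metric.uniformContinuousOn_iff.1
    ((isCompact_closedBall (0:ℂ) 1).uniformContinuousOn_of_continuous hFcont) ε hεpos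
  -- choose a radius r < 1 with 1 - r < δ
  set r : ℝ := max (1 - δ / 2) 0 with hrdef
  have hr0 : 0 ≤ r := le_max_right _ _
  have hr1 : r < 1 := max_lt (by linarith) one_pos
  have hrδ : 1 - r < δ := by
    have := le_max_left (1 - δ / 2) 0
    simp only [← hrdef] at this; linarith
  have hsub : closedBall (0:ℂ) r ⊆ ball (0:ℂ) 1 := closedBall_subset_ball hr1
  have hmemc : ∀ t : ℝ, circleMap 0 r t ∈ closedBall (0:ℂ) 1 :=
    fun t => closedBall_subset_closedBall hr1.le (circleMap_mem_closedBall 0 hr0 t)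
  have hmemb : ∀ t : ℝ, circleMap 0 r t ∈ ball (0:ℂ) 1 :=
    fun t => hsub (circleMap_mem_closedBall 0 hr0 t)
  have hmem1 : ∀ t : ℝ, circleMap 0 1 t ∈ closedBall (0:ℂ) 1 :=
    fun t => circleMap_mem_closedBall 0 zero_le_one t
  -- f in terms of circleMap
  have hfe : ∀ t : ℝ, f t = F (circleMap 0 1 t) := by
    intro t
    rw [hfdef]
    congr 1
    simp [circleMap, mul_comm]
  set g : ℝ → ℂ := F ∘ circleMap 0 r with hgdef
  have hfne : ∀ t : ℝ, f t ≠ 0 := fun t => by rw [hfe]; exact hFne _ (hmem1 t)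
  have hgne : ∀ t : ℝ, g t ≠ 0 := fun t => hFne _ (hmemc t)
  -- closeness
  have hclose : ∀ t : ℝ, ‖g t - f t‖ < ε := by
    intro t
    have hd : dist (circleMap 0 r t) (circleMap 0 1 t) < δ := by
      have h1 : circleMap 0 r t - circleMap 0 1 t
          = ((r : ℂ) - 1) * Complex.exp (t * Complex.I) := by
        simp [circleMap]; ring
      rw [Complex.dist_eq, h1, norm_mul, Complex.norm_exp_ofReal_mul_I, mul_one]
      have : ((r : ℂ) - 1) = ((r - 1 : ℝ) : ℂ) := by push_cast; ring
      rw [this, Complex.norm_real, Real.norm_eq_abs, abs_of_nonpos (by linarith)]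
      linarith
    have := hδ _ (hmemc t) _ (hmem1 t) hd
    rw [dist_eq_norm] at this
    rw [hfe]
    exact this
  have hεf : ∀ t : ℝ, ε ≤ ‖f t‖ := fun t => by rw [hfe]; exact hz₀min (hmem1 t)
  -- the quotient u lies in the right half plane
  set u : ℝ → ℂ := fun t => g t / f t with hudef
  have hune : ∀ t : ℝ, u t ≠ 0 := fun t => div_ne_zero (hgne t) (hfne t)
  have huslit : ∀ t : ℝ, u t ∈ Complex.slitPlane := by
    intro t
    have h1 : ‖u t - 1‖ < 1 := by
      have : u t - 1 = (g t - f t) / f t := by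
        rw [hudef, div_sub_one (hfne t)]
      rw [this, norm_div, div_lt_one (norm_pos_iff.2 (hfne t))]
      exact lt_of_lt_of_le (hclose t) (hεf t)
    left
    have h2 := Complex.abs_re_le_norm (u t - 1)
    have h3 : |(u t).re - 1| < 1 := by
      simpa [Complex.sub_re] using lt_of_le_of_lt h2 h1
    have := abs_lt.1 h3
    linarith [this.1]
  -- derivative facts
  have hFan : AnalyticOnNhd ℂ F (ball (0:ℂ) 1) := hFdiff.analyticOnNhd isOpen_ball
  have hF'an : AnalyticOnNhd ℂ (deriv F) (ball (0:ℂ) 1) := hFan.deriv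
  have hF'cont : ContinuousOn (deriv F) (ball (0:ℂ) 1) := hF'an.continuousOn
  have hF' : ∀ w ∈ ball (0:ℂ) 1, HasDerivAt F (deriv F w) w := fun w hw =>
    (hFdiff.differentiableAt (isOpen_ball.mem_nhds hw)).hasDerivAt
  set G' : ℝ → ℂ := fun t => deriv F (circleMap 0 r t) * (circleMap 0 r t * Complex.I)
    with hG'def
  have hg' : ∀ t : ℝ, HasDerivAt g (G' t) t := fun t =>
    (hF' _ (hmemb t)).comp t (hasDerivAt_circleMap 0 r t)
  have hf' : ∀ t : ℝ, HasDerivAt f (deriv f t) t := fun t =>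
    (hf.differentiable one_ne_zero t).hasDerivAt
  -- continuity of integrands
  have hgc : Continuous g :=
    (hFdiff.continuousOn.comp_continuous (continuous_circleMap 0 r) hmemb)
  have hG'c : Continuous G' :=
    ((hF'cont.comp_continuous (continuous_circleMap 0 r) hmemb).mul
      ((continuous_circleMap 0 r).mul continuous_const))
  have hfc : Continuous f := hf.continuous
  have hf'c : Continuous (deriv f) := hf.continuous_deriv le_rfl
  have hint1 : IntervalIntegrable (fun t => G' t / g t) MeasureTheory.volume 0 (2 * Real.pi) :=
    (hG'c.div hgc hgne).intervalIntegrable _ _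
  have hint2 : IntervalIntegrable (fun t => deriv f t / f t)
      MeasureTheory.volume 0 (2 * Real.pi) :=
    (hf'c.div hfc hfne).intervalIntegrable _ _
  -- Cauchy's theorem: ∫ g'/g = 0
  have hA : ∫ t in (0:ℝ)..(2 * Real.pi), G' t / g t = 0 := by
    have hcont : ContinuousOn (fun w => deriv F w / F w) (closedBall (0:ℂ) r) :=
      (hF'cont.mono hsub).div (hFcont.mono (hsub.trans ball_subset_closedBall))
        (fun w hw => hFne w ((hsub.trans ball_subset_closedBall) hw))
    have hdiff : ∀ w ∈ ball (0:ℂ) r \ (∅ : Set ℂ),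
        DifferentiableAt ℂ (fun w => deriv F w / F w) w := by
      intro w hw
      have hw1 : w ∈ ball (0:ℂ) 1 := ball_subset_ball hr1.le hw.1
      exact ((hF'an w hw1).differentiableAt).div
        (hFdiff.differentiableAt (isOpen_ball.mem_nhds hw1)) (hFne w (ball_subset_closedBall hw1))
    have h0 := circleIntegral_eq_zero_of_differentiable_on_off_countable hr0
      countable_empty hcont hdiff
    rw [circleIntegral] at h0
    rw [← h0]
    refine intervalIntegral.integral_congr fun t _ => ?_
    rw [deriv_circleMap, smul_eq_mul]
    have h1 : circleMap 0 r t = circleMap 0 r t := rfl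
    simp only [hG'def, hgdef, Function.comp_apply]
    field_simp
  -- FTC: ∫ (g'/g - f'/f) = log u(2π) - log u(0) = 0
  have hB : ∫ t in (0:ℝ)..(2 * Real.pi), (G' t / g t - deriv f t / f t)
      = Complex.log (u (2 * Real.pi)) - Complex.log (u 0) := by
    refine intervalIntegral.integral_eq_sub_of_hasDerivAt
      (f := fun t => Complex.log (u t)) (fun t _ => ?_) ((hint1.sub hint2))
    have hu : HasDerivAt u ((G' t * f t - g t * deriv f t) / f t ^ 2) t :=
      (hg' t).div (hf' t) (hfne t)
    have hl := hu.clog_real (huslit t)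
    have heq : (G' t * f t - g t * deriv f t) / f t ^ 2 / u t
        = G' t / g t - deriv f t / f t := by
      rw [hudef]
      field_simp [hfne t, hgne t]
    rw [heq] at hl
    exact hl
  have hper : u (2 * Real.pi) = u 0 := by
    have hg2 : g (2 * Real.pi) = g 0 := by
      have := (periodic_circleMap 0 r) 0
      simp only [zero_add] at this
      simp [hgdef, this]
    have hf2 : f (2 * Real.pi) = f 0 := by
      have := (periodic_circleMap 0 1) 0
      simp only [zero_add] at this
      rw [hfe, hfe, this]
    simp [hudef, hg2, hf2]
  rw [hper, sub_self] at hB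
  have := intervalIntegral.integral_sub hint1 hint2
  rw [hB, hA, zero_sub] at this
  exact neg_eq_zero.1 this.symm
end

section
/- Let F, G : ℂ → ℂ be continuous on the closed unit disk {z : |z| ≤ 1}, complex-differentiable on the open unit disk {z : |z| < 1}, and nonvanishing on the closed unit disk. Set f(t) := F(exp(i·t)) and g(t) := G(exp(i·t)) for t ∈ ℝ, assume f and g are continuously differentiable, and let L : ℝ → ℂ be a branch of log f on [0,2π]. Then exp((1/(2πi)) ∫₀^{2π} L(t)·g'(t)/g(t) dt) = 1; that is, the Deligne–Beilinson pairing of the boundary restrictions of two nonvanishing functions on the closed unit disk that are holomorphic on the interior equals 1 (the analytic reciprocity law for the disk). -/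
open MeasureTheory Complex Set Metric intervalIntegral
open scoped Real

/-- Continuous logarithm along a C¹ nonvanishing path. -/
lemma pathLog {φ dφ : ℝ → ℂ} (hφ : ∀ t, HasDerivAt φ (dφ t) t) (hdc : Continuous dφ)
    (hne : ∀ t, φ t ≠ 0) :
    ∃ Λ : ℝ → ℂ, Continuous Λ ∧ (∀ t, HasDerivAt Λ (dφ t / φ t) t) ∧
      (∀ t, Complex.exp (Λ t) = φ t) := by
  have hφc : Continuous φ := continuous_iff_continuousAt.mpr fun t => (hφ t).continuousAt
  set q : ℝ → ℂ := fun t => dφ t / φ t with hq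
  have hqc : Continuous q := hdc.div hφc hne
  set Λ : ℝ → ℂ := fun t => Complex.log (φ 0) + ∫ s in (0:ℝ)..t, q s with hΛ
  have hΛd : ∀ t, HasDerivAt Λ (q t) t := by
    intro t
    exact ((intervalIntegral.integral_hasDerivAt_right (hqc.intervalIntegrable _ _)
      (hqc.stronglyMeasurable.stronglyMeasurableAtFilter) hqc.continuousAt).const_add _)
  have hΛc : Continuous Λ := continuous_iff_continuousAt.mpr fun t => (hΛd t).continuousAt
  have key : ∀ t, φ t * Complex.exp (-Λ t) = 1 := by
    have hh : ∀ t, HasDerivAt (fun t => φ t * Complex.exp (-Λ t)) 0 t := by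
      intro t
      have he : HasDerivAt (fun t => Complex.exp (-Λ t)) (-q t * Complex.exp (-Λ t)) t := by
        have := (Complex.hasDerivAt_exp (-Λ t)).scomp t ((hΛd t).neg)
        simpa [smul_eq_mul, Function.comp_def] using this
      have := (hφ t).mul he
      refine this.congr_deriv ?_
      have h1 : φ t ≠ 0 := hne t
      simp only [hq]
      field_simp
      ring
    have hconst := is_const_of_deriv_eq_zero (fun t => (hh t).differentiableAt)
      (fun t => (hh t).deriv)
    intro t
    have := hconst t 0
    rw [this]
    simp only [hΛ, intervalIntegral.integral_same, add_zero, neg_add_rev]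
    rw [Complex.exp_neg, Complex.exp_log (hne 0)]
    field_simp
    exact div_self (hne 0)
  refine ⟨Λ, hΛc, hΛd, fun t => ?_⟩
  have := key t
  rw [Complex.exp_neg] at this
  field_simp at this
  exact this.symm

/-- A continuous function with exponential 1 on an interval is constant there. -/
lemma const_of_exp_eq_one {D : ℝ → ℂ} {a b : ℝ} (hab : a ≤ b)
    (hD : ContinuousOn D (Icc a b))
    (h1 : ∀ t ∈ Icc a b, Complex.exp (D t) = 1) : ∀ t ∈ Icc a b, D t = D a := by
  have hform : ∀ t ∈ Icc a b, ∃ k : ℤ, D t = k * (2 * π * Complex.I) := by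
    intro t ht
    exact Complex.exp_eq_one_iff.mp (h1 t ht)
  intro t ht
  obtain ⟨k, hk⟩ := hform t ht
  obtain ⟨k0, hk0⟩ := hform a (left_mem_Icc.mpr hab)
  suffices hkk : k = k0 by rw [hk, hk0, hkk]
  by_contra hne
  -- consider the imaginary part
  set ρ : ℝ → ℝ := fun s => (D s).im with hρ
  have hρc : ContinuousOn ρ (Icc a b) := Complex.continuous_im.comp_continuousOn hD
  have hρt : ρ t = k * (2 * π) := by simp [hρ, hk]
  have hρa : ρ a = k0 * (2 * π) := by simp [hρ, hk0]
  have hπ : (0:ℝ) < π := Real.pi_pos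
  -- find an intermediate point with value ρ a + π or ρ a - π
  rcases lt_or_gt_of_ne hne with h | h
  · -- k < k0 : ρ t ≤ ρ a - 2π < ρ a - π < ρ a
    have hιa : t ∈ Icc a b := ht
    have hmem : ρ a - π ∈ Icc (ρ t) (ρ a) := by
      constructor
      · rw [hρt, hρa]
        have : (k:ℝ) + 1 ≤ k0 := by exact_mod_cast h
        nlinarith
      · nlinarith
    have hsub : Icc a t ⊆ Icc a b := Icc_subset_Icc_right ht.2
    have := intermediate_value_Icc' ht.1 (hρc.mono hsub) hmem
    obtain ⟨s, hs, hval⟩ := this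
    obtain ⟨ks, hks⟩ := hform s (hsub hs)
    have : ρ s = ks * (2*π) := by simp [hρ, hks]
    rw [this, hρa] at hval
    have : (2*ks - 2*k0 + 1 : ℝ) * π = 0 := by push_cast; nlinarith
    have h2 : (2*ks - 2*k0 + 1 : ℝ) = 0 := by
      rcases mul_eq_zero.mp this with h' | h'
      · exact h'
      · exact absurd h' hπ.ne'
    have : (2*ks - 2*k0 + 1 : ℤ) = 0 := by exact_mod_cast h2
    omega
  · have hmem : ρ a + π ∈ Icc (ρ a) (ρ t) := by
      constructor
      · nlinarith
      · rw [hρt, hρa]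
        have : (k0:ℝ) + 1 ≤ k := by exact_mod_cast h
        nlinarith
    have hsub : Icc a t ⊆ Icc a b := Icc_subset_Icc_right ht.2
    have := intermediate_value_Icc ht.1 (hρc.mono hsub) hmem
    obtain ⟨s, hs, hval⟩ := this
    obtain ⟨ks, hks⟩ := hform s (hsub hs)
    have : ρ s = ks * (2*π) := by simp [hρ, hks]
    rw [this, hρa] at hval
    have : (2*ks - 2*k0 - 1 : ℝ) * π = 0 := by push_cast; nlinarith
    have h2 : (2*ks - 2*k0 - 1 : ℝ) = 0 := by
      rcases mul_eq_zero.mp this with h' | h'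
      · exact h'
      · exact absurd h' hπ.ne'
    have : (2*ks - 2*k0 - 1 : ℤ) = 0 := by exact_mod_cast h2
    omega

/-- Vanishing moments of the logarithmic derivative on circles inside the disk. -/
lemma moment_vanish {F : ℂ → ℂ}
    (hFdiff : DifferentiableOn ℂ F (Metric.ball 0 1))
    (hFne : ∀ z ∈ Metric.ball (0:ℂ) 1, F z ≠ 0)
    {r : ℝ} (hr0 : 0 < r) (hr1 : r < 1) (n : ℕ) :
    ∫ t in (0:ℝ)..(2*π), (deriv F ((r:ℂ) * Complex.exp (Complex.I * t)) *
        (Complex.I * ((r:ℂ) * Complex.exp (Complex.I * t))) /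
        F ((r:ℂ) * Complex.exp (Complex.I * t))) * Complex.exp (Complex.I * t) ^ n = 0 := by
  have hA : AnalyticOnNhd ℂ F (Metric.ball 0 1) := hFdiff.analyticOnNhd Metric.isOpen_ball
  have hball : Metric.closedBall (0:ℂ) r ⊆ Metric.ball 0 1 :=
    Metric.closedBall_subset_ball hr1
  set H : ℂ → ℂ := fun z => deriv F z / F z * z ^ n with hH
  have hHcont : ContinuousOn H (Metric.closedBall 0 r) := by
    apply ContinuousOn.mul
    · exact ((hA.deriv.continuousOn.mono hball).div ((hA.continuousOn).mono hball)
        (fun z hz => hFne z (hball hz)))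
    · exact (continuousOn_id.pow n)
  have hHdiff : ∀ z ∈ Metric.ball (0:ℂ) r \ (∅ : Set ℂ), DifferentiableAt ℂ H z := by
    intro z hz
    have hz1 : z ∈ Metric.ball (0:ℂ) 1 := hball (Metric.ball_subset_closedBall hz.1)
    exact (((hA.deriv z hz1).differentiableAt.div
      (hA z hz1).differentiableAt (hFne z hz1)).mul ((differentiable_id.pow n).differentiableAt))
  have hzero : (∮ z in C(0, r), H z) = 0 :=
    circleIntegral_eq_zero_of_differentiable_on_off_countable hr0.le Set.countable_empty
      hHcont hHdiff
  have hexp : ∀ t : ℝ, circleMap 0 r t = (r:ℂ) * Complex.exp (Complex.I * t) := by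
    intro t
    simp [circleMap, mul_comm]
  have hunfold : (∮ z in C(0, r), H z) = (r:ℂ)^n * ∫ t in (0:ℝ)..(2*π),
      (deriv F ((r:ℂ) * Complex.exp (Complex.I * t)) *
        (Complex.I * ((r:ℂ) * Complex.exp (Complex.I * t))) /
        F ((r:ℂ) * Complex.exp (Complex.I * t))) * Complex.exp (Complex.I * t) ^ n := by
    rw [circleIntegral, ← intervalIntegral.integral_const_mul]
    apply intervalIntegral.integral_congr
    intro t _
    simp only [deriv_circleMap, hexp, hH]
    simp only [smul_eq_mul]
    have hFz : F ((r:ℂ) * Complex.exp (Complex.I * t)) ≠ 0 := by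
      apply hFne
      apply hball
      rw [Metric.mem_closedBall, dist_zero_right]
      rw [norm_mul]
      rw [show Complex.I * (t:ℂ) = (t:ℂ) * Complex.I by ring]
      rw [Complex.norm_exp_ofReal_mul_I]
      simp [abs_of_pos hr0, hr0.le]
    rw [mul_pow]
    ring
  rw [hunfold] at hzero
  have hrn : ((r:ℂ))^n ≠ 0 := pow_ne_zero _ (by exact_mod_cast hr0.ne')
  exact (mul_eq_zero.mp hzero).resolve_left hrn

lemma hasDerivAt_expI (n : ℕ) (t : ℝ) :
    HasDerivAt (fun s : ℝ => Complex.exp (Complex.I * n * s))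
      (Complex.exp (Complex.I * n * t) * (Complex.I * n)) t := by
  have h1 : HasDerivAt (fun z : ℂ => Complex.I * n * z) (Complex.I * n) (t:ℂ) := by
    simpa using (hasDerivAt_id (t:ℂ)).const_mul (Complex.I * n)
  have h2 := (Complex.hasDerivAt_exp (Complex.I * n * t)).comp (t:ℂ) h1
  exact h2.comp_ofReal

lemma exp_two_pi_n (n : ℕ) : Complex.exp (Complex.I * n * ((2*π:ℝ):ℂ)) = 1 := by
  rw [show Complex.I * (n:ℂ) * ((2*π:ℝ):ℂ) = (n:ℂ) * (2*(π:ℂ)*Complex.I) by push_cast; ring]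
  rw [Complex.exp_nat_mul, Complex.exp_two_pi_mul_I, one_pow]

lemma integral_exp_In {n : ℕ} (hn : n ≠ 0) :
    ∫ t in (0:ℝ)..(2*π), Complex.exp (Complex.I * n * t) = 0 := by
  have hIn : (Complex.I * n : ℂ) ≠ 0 :=
    mul_ne_zero Complex.I_ne_zero (Nat.cast_ne_zero.mpr hn)
  have hv : ∀ t : ℝ, HasDerivAt (fun s : ℝ => Complex.exp (Complex.I * n * s) * (Complex.I * n)⁻¹)
      (Complex.exp (Complex.I * n * t)) t := by
    intro t
    have := (hasDerivAt_expI n t).mul_const (Complex.I * n)⁻¹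
    refine this.congr_deriv ?_
    rw [mul_assoc, mul_inv_cancel₀ hIn, mul_one]
  rw [intervalIntegral.integral_eq_sub_of_hasDerivAt (fun t _ => hv t)
    (((Complex.continuous_exp.comp (by continuity)).intervalIntegrable _ _))]
  rw [show ((2*π:ℝ):ℂ) = ((2*π:ℝ):ℂ) from rfl]
  rw [exp_two_pi_n]
  norm_num

/-- Periodicity and vanishing of positive Fourier moments for any continuous logarithm of the
boundary values of a nonvanishing holomorphic function on the disk. -/
lemma boundary_log {F : ℂ → ℂ}
    (hFcont : ContinuousOn F (Metric.closedBall 0 1))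
    (hFdiff : DifferentiableOn ℂ F (Metric.ball 0 1))
    (hFne : ∀ z ∈ Metric.closedBall (0:ℂ) 1, F z ≠ 0)
    {K : ℝ → ℂ} (hKc : Continuous K)
    (hK : ∀ t ∈ Icc (0:ℝ) (2*π), Complex.exp (K t) = F (Complex.exp (Complex.I * t))) :
    K (2*π) = K 0 ∧ ∀ n : ℕ, n ≠ 0 →
      (∫ t in (0:ℝ)..(2*π), K t * Complex.exp (Complex.I * n * t)) = 0 := by
  have hπ : (0:ℝ) < π := Real.pi_pos
  have habs : ∀ t : ℝ, ‖Complex.exp (Complex.I * t)‖ = 1 := by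
    intro t
    rw [show Complex.I * (t:ℂ) = (t:ℂ) * Complex.I by ring]
    exact Complex.norm_exp_ofReal_mul_I t
  have hecont : Continuous (fun t : ℝ => Complex.exp (Complex.I * t)) :=
    Complex.continuous_exp.comp (continuous_const.mul Complex.continuous_ofReal)
  have hmem1 : ∀ t : ℝ, Complex.exp (Complex.I * t) ∈ Metric.closedBall (0:ℂ) 1 := by
    intro t
    rw [Metric.mem_closedBall, dist_zero_right, habs]
  -- minimum modulus
  obtain ⟨z₀, hz₀mem, hz₀min⟩ := (isCompact_closedBall (0:ℂ) 1).exists_isMinOn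
    ⟨0, by simp⟩ hFcont.norm
  set m : ℝ := ‖F z₀‖ with hm
  have hm0 : 0 < m := norm_pos_iff.mpr (hFne z₀ hz₀mem)
  have hmle : ∀ z ∈ Metric.closedBall (0:ℂ) 1, m ≤ ‖F z‖ := fun z hz => hz₀min hz
  -- the key approximation construction
  have key : ∀ ε : ℝ, 0 < ε → ∃ (Λ δf : ℝ → ℂ) (C : ℂ),
      Λ (2*π) = Λ 0 ∧
      (∀ n : ℕ, n ≠ 0 → (∫ t in (0:ℝ)..(2*π), Λ t * Complex.exp (Complex.I * n * t)) = 0) ∧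
      Continuous Λ ∧ Continuous δf ∧ δf (2*π) = δf 0 ∧ (∀ t, ‖δf t‖ ≤ ε) ∧
      (∀ t ∈ Icc (0:ℝ) (2*π), K t = Λ t + δf t + C) := by
    intro ε hε
    -- continuity of log at 1
    obtain ⟨δ₁, hδ₁0, hδ₁⟩ := Metric.continuousAt_iff.mp
      (continuousAt_clog Complex.one_mem_slitPlane) ε hε
    set δ₂ : ℝ := min δ₁ (1/2) with hδ₂
    have hδ₂0 : 0 < δ₂ := lt_min hδ₁0 (by norm_num)
    -- uniform continuity of F
    have hUC := ((isCompact_closedBall (0:ℂ) 1).uniformContinuousOn_of_continuous hFcont)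
    rw [Metric.uniformContinuousOn_iff] at hUC
    obtain ⟨δF, hδF0, hδF⟩ := hUC (m * δ₂) (by positivity)
    -- choice of radius
    set r : ℝ := max (1/2) (1 - min δF 1 / 2) with hr
    have hr0 : 0 < r := lt_of_lt_of_le (by norm_num) (le_max_left _ _)
    have hr1 : r < 1 := by
      apply max_lt (by norm_num)
      have : 0 < min δF 1 := lt_min hδF0 one_pos
      linarith
    have hrd : 1 - r < δF := by
      have h1 : 1 - min δF 1 / 2 ≤ r := le_max_right _ _
      have h2 : min δF 1 ≤ δF := min_le_left _ _
      have h3 : 0 < min δF 1 := lt_min hδF0 one_pos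
      linarith
    have hmemr : ∀ t : ℝ, (r:ℂ) * Complex.exp (Complex.I * t) ∈ Metric.ball (0:ℂ) 1 := by
      intro t
      rw [Metric.mem_ball, dist_zero_right, norm_mul,
        habs, Complex.norm_real, Real.norm_eq_abs, abs_of_pos hr0, mul_one]
      exact hr1
    have hmemrC : ∀ t : ℝ, (r:ℂ) * Complex.exp (Complex.I * t) ∈ Metric.closedBall (0:ℂ) 1 :=
      fun t => Metric.ball_subset_closedBall (hmemr t)
    have hdistr : ∀ t : ℝ, dist ((r:ℂ) * Complex.exp (Complex.I * t))
        (Complex.exp (Complex.I * t)) < δF := by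
      intro t
      rw [dist_eq_norm]
      have : (r:ℂ) * Complex.exp (Complex.I * t) - Complex.exp (Complex.I * t)
          = ((r - 1 : ℝ):ℂ) * Complex.exp (Complex.I * t) := by push_cast; ring
      rw [this, norm_mul, habs, Complex.norm_real, Real.norm_eq_abs,
        mul_one, abs_of_neg (by linarith : r - 1 < 0)]
      linarith
    have hFdist : ∀ t : ℝ, dist (F ((r:ℂ) * Complex.exp (Complex.I * t)))
        (F (Complex.exp (Complex.I * t))) < m * δ₂ :=
      fun t => hδF _ (hmemrC t) _ (hmem1 t) (hdistr t)
    -- the path and its logarithm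
    set φ : ℝ → ℂ := fun t => F ((r:ℂ) * Complex.exp (Complex.I * t)) with hφdef
    set dφ : ℝ → ℂ := fun t => deriv F ((r:ℂ) * Complex.exp (Complex.I * t)) *
      (Complex.I * ((r:ℂ) * Complex.exp (Complex.I * t))) with hdφdef
    have hφne : ∀ t, φ t ≠ 0 := fun t => hFne _ (hmemrC t)
    have hφd : ∀ t, HasDerivAt φ (dφ t) t := by
      intro t
      have h1 : HasDerivAt (fun z : ℂ => Complex.I * z) Complex.I (t:ℂ) := by
        simpa using (hasDerivAt_id (t:ℂ)).const_mul Complex.I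
      have h2 := (Complex.hasDerivAt_exp (Complex.I * t)).comp (t:ℂ) h1
      have h3 := (h2.const_mul (r:ℂ)).comp_ofReal
      have h5 : DifferentiableAt ℂ F ((r:ℂ) * Complex.exp (Complex.I * t)) :=
        hFdiff.differentiableAt (Metric.isOpen_ball.mem_nhds (hmemr t))
      have h6 := h5.hasDerivAt.scomp t h3
      have : HasDerivAt φ (((r:ℂ) * (Complex.exp (Complex.I * t) * Complex.I)) •
          deriv F ((r:ℂ) * Complex.exp (Complex.I * t))) t := h6
      convert this using 1
      simp only [smul_eq_mul]
      ring
    have hφc : Continuous φ := continuous_iff_continuousAt.mpr fun t => (hφd t).continuousAt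
    have hpathc : Continuous (fun t : ℝ => (r:ℂ) * Complex.exp (Complex.I * t)) :=
      continuous_const.mul hecont
    have hdφc : Continuous dφ := by
      apply Continuous.mul
      · exact ContinuousOn.comp_continuous
          ((hFdiff.analyticOnNhd Metric.isOpen_ball).deriv.continuousOn) hpathc hmemr
      · exact continuous_const.mul hpathc
    obtain ⟨Λ, hΛc, hΛd, hΛexp⟩ := pathLog hφd hdφc hφne
    set q : ℝ → ℂ := fun t => dφ t / φ t with hqdef
    have hqc : Continuous q := hdφc.div hφc hφne
    have hmom : ∀ n : ℕ, (∫ t in (0:ℝ)..(2*π), q t * Complex.exp (Complex.I * t) ^ n) = 0 :=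
      fun n => moment_vanish hFdiff (fun z hz => hFne z (Metric.ball_subset_closedBall hz))
        hr0 hr1 n
    have hΛper : Λ (2*π) = Λ 0 := by
      have hFTC := intervalIntegral.integral_eq_sub_of_hasDerivAt
        (f := Λ) (f' := q) (fun t _ => hΛd t) (hqc.intervalIntegrable 0 (2*π))
      have h0 := hmom 0
      simp only [pow_zero, mul_one] at h0
      rw [h0] at hFTC
      exact (sub_eq_zero.mp hFTC.symm)
    have hΛmom : ∀ n : ℕ, n ≠ 0 →
        (∫ t in (0:ℝ)..(2*π), Λ t * Complex.exp (Complex.I * n * t)) = 0 := by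
      intro n hn
      have hIn : (Complex.I * n : ℂ) ≠ 0 :=
        mul_ne_zero Complex.I_ne_zero (Nat.cast_ne_zero.mpr hn)
      set v : ℝ → ℂ := fun t => Complex.exp (Complex.I * n * t) * (Complex.I * n)⁻¹ with hvdef
      have hv : ∀ t : ℝ, HasDerivAt v (Complex.exp (Complex.I * n * t)) t := by
        intro t
        have h := (hasDerivAt_expI n t).mul_const (Complex.I * n)⁻¹
        rw [mul_assoc, mul_inv_cancel₀ hIn, mul_one] at h
        exact h
      have hexpc : Continuous (fun t : ℝ => Complex.exp (Complex.I * n * t)) :=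
        Complex.continuous_exp.comp (continuous_const.mul Complex.continuous_ofReal)
      have hibp := intervalIntegral.integral_mul_deriv_eq_deriv_mul
        (u := Λ) (v := v) (u' := q) (v' := fun t => Complex.exp (Complex.I * n * t))
        (fun t _ => hΛd t) (fun t _ => hv t)
        (hqc.intervalIntegrable 0 (2*π)) (hexpc.intervalIntegrable 0 (2*π))
      have hqv : (∫ t in (0:ℝ)..(2*π), q t * v t) = 0 := by
        have : (∫ t in (0:ℝ)..(2*π), q t * v t)
            = (∫ t in (0:ℝ)..(2*π), q t * Complex.exp (Complex.I * t) ^ n) * (Complex.I * n)⁻¹ := by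
          rw [← intervalIntegral.integral_mul_const]
          apply intervalIntegral.integral_congr
          intro t _
          have : Complex.exp (Complex.I * n * t) = Complex.exp (Complex.I * t) ^ n := by
            rw [← Complex.exp_nat_mul]
            congr 1
            ring
          rw [hvdef]
          simp only [this]
          ring
        rw [this, hmom n, zero_mul]
      rw [hibp, hqv, sub_zero, hΛper]
      have hv2 : v (2*π) = v 0 := by
        rw [hvdef]
        simp only
        rw [exp_two_pi_n]
        norm_num
      rw [hv2]
      ring
    -- the ratio and correction term
    set ratio : ℝ → ℂ := fun t => F (Complex.exp (Complex.I * t)) / φ t with hratiodef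
    have hrationz : ∀ t, ratio t ≠ 0 := fun t =>
      div_ne_zero (hFne _ (hmem1 t)) (hφne t)
    have hsmall : ∀ t, dist (ratio t) 1 < δ₂ := by
      intro t
      rw [dist_eq_norm]
      have h1 : ratio t - 1 = (F (Complex.exp (Complex.I * t)) - φ t) / φ t := by
        rw [hratiodef]
        simp only
        rw [sub_div, div_self (hφne t)]
      rw [h1, norm_div]
      have h2 : ‖F (Complex.exp (Complex.I * t)) - φ t‖ < m * δ₂ := by
        rw [← dist_eq_norm, dist_comm]
        exact hFdist t
      have h3 : m ≤ ‖φ t‖ := hmle _ (hmemrC t)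
      rw [div_lt_iff₀ (by linarith : (0:ℝ) < ‖φ t‖)]
      nlinarith
    have hslit : ∀ t, ratio t ∈ Complex.slitPlane := by
      intro t
      have h1 : ratio t = 1 + (ratio t - 1) := by ring
      rw [h1]
      apply Complex.mem_slitPlane_of_norm_lt_one
      rw [← dist_eq_norm'] -- ‖ratio - 1‖ : dist_eq_norm : dist a b = ‖a - b‖
      calc dist 1 (ratio t) = dist (ratio t) 1 := dist_comm _ _
        _ < δ₂ := hsmall t
        _ ≤ 1/2 := min_le_right _ _
        _ < 1 := by norm_num
    set δf : ℝ → ℂ := fun t => Complex.log (ratio t) with hδfdef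
    have hratioc : Continuous ratio :=
      (hFcont.comp_continuous hecont hmem1).div hφc hφne
    have hδfc : Continuous δf := continuous_iff_continuousAt.mpr fun t =>
      (continuousAt_clog (hslit t)).comp (hratioc.continuousAt)
    have hδfb : ∀ t, ‖δf t‖ ≤ ε := by
      intro t
      have := hδ₁ (show dist (ratio t) 1 < δ₁ from lt_of_lt_of_le (hsmall t) (min_le_left _ _))
      rw [Complex.log_one, dist_zero_right] at this
      exact le_of_lt this
    have he2π : Complex.exp (Complex.I * ((2*π:ℝ):ℂ)) = Complex.exp (Complex.I * ((0:ℝ):ℂ)) := by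
      push_cast
      rw [mul_zero, Complex.exp_zero, show Complex.I * (2*(π:ℂ)) = 2*(π:ℂ)*Complex.I by ring,
        Complex.exp_two_pi_mul_I]
    have hδfper : δf (2*π) = δf 0 := by
      rw [hδfdef]
      simp only [hratiodef, hφdef, he2π]
    -- constancy of the difference
    set D : ℝ → ℂ := fun t => K t - Λ t - δf t with hDdef
    have hD1 : ∀ t ∈ Icc (0:ℝ) (2*π), Complex.exp (D t) = 1 := by
      intro t ht
      rw [hDdef]
      simp only
      rw [Complex.exp_sub, Complex.exp_sub, hK t ht, hΛexp, hδfdef]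
      simp only
      rw [Complex.exp_log (hrationz t), hratiodef]
      simp only
      field_simp
      rw [mul_comm]
      exact div_self (mul_ne_zero (hφne t) (hFne _ (hmem1 t)))
    have hDc : ContinuousOn D (Icc 0 (2*π)) :=
      ((hKc.sub hΛc).sub hδfc).continuousOn
    have hDconst := const_of_exp_eq_one (by positivity) hDc hD1
    refine ⟨Λ, δf, D 0, hΛper, hΛmom, hΛc, hδfc, hδfper, hδfb, ?_⟩
    intro t ht
    have := hDconst t ht
    rw [hDdef] at this
    simp only at this
    linear_combination this
  constructor
  · obtain ⟨Λ, δf, C, hΛper, _, _, _, hδfper, _, hKeq⟩ := key 1 one_pos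
    have h2π : (2*π : ℝ) ∈ Icc (0:ℝ) (2*π) := by
      exact ⟨by positivity, le_refl _⟩
    have h0 : (0:ℝ) ∈ Icc (0:ℝ) (2*π) := ⟨le_refl _, by positivity⟩
    rw [hKeq _ h2π, hKeq _ h0, hΛper, hδfper]
  · intro n hn
    set X := ∫ t in (0:ℝ)..(2*π), K t * Complex.exp (Complex.I * n * t) with hX
    have hnorm1 : ∀ t : ℝ, ‖Complex.exp (Complex.I * n * t)‖ = 1 := by
      intro t
      rw [show Complex.I * (n:ℂ) * (t:ℂ) = ((n*t:ℝ):ℂ) * Complex.I by push_cast; ring,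
        Complex.norm_exp_ofReal_mul_I]
    have hexpc : Continuous (fun t : ℝ => Complex.exp (Complex.I * n * t)) :=
      Complex.continuous_exp.comp (continuous_const.mul Complex.continuous_ofReal)
    have hbound : ∀ ε : ℝ, 0 < ε → ‖X‖ ≤ ε * (2*π) := by
      intro ε hε
      obtain ⟨Λ, δf, C, hΛper, hΛmom, hΛc, hδfc, hδfper, hδfb, hKeq⟩ := key ε hε
      have hsplit : X = (∫ t in (0:ℝ)..(2*π), Λ t * Complex.exp (Complex.I * n * t))
          + ((∫ t in (0:ℝ)..(2*π), δf t * Complex.exp (Complex.I * n * t))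
          + (∫ t in (0:ℝ)..(2*π), C * Complex.exp (Complex.I * n * t))) := by
        rw [hX, ← intervalIntegral.integral_add
            (f := fun t => δf t * Complex.exp (Complex.I * n * t))
            (g := fun t => C * Complex.exp (Complex.I * n * t))
            ((hδfc.mul hexpc).intervalIntegrable _ _)
            ((continuous_const.mul hexpc).intervalIntegrable _ _),
          ← intervalIntegral.integral_add
            (f := fun t => Λ t * Complex.exp (Complex.I * n * t))
            (g := fun t => δf t * Complex.exp (Complex.I * n * t) + C * Complex.exp (Complex.I * n * t))
            ((hΛc.mul hexpc).intervalIntegrable _ _)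
            (((hδfc.mul hexpc).add (continuous_const.mul hexpc)).intervalIntegrable _ _)]
        apply intervalIntegral.integral_congr
        intro t ht
        rw [uIcc_of_le (by positivity : (0:ℝ) ≤ 2*π)] at ht
        simp only []
        rw [hKeq t ht]
        ring
      have hC : (∫ t in (0:ℝ)..(2*π), C * Complex.exp (Complex.I * n * t)) = 0 := by
        rw [intervalIntegral.integral_const_mul, integral_exp_In hn, mul_zero]
      rw [hsplit, hΛmom n hn, hC, add_zero, zero_add]
      have hb := intervalIntegral.norm_integral_le_of_norm_le_const (C := ε)
        (f := fun t => δf t * Complex.exp (Complex.I * n * t)) (a := 0) (b := 2*π) ?_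
      · calc ‖_‖ ≤ ε * |2*π - 0| := hb
          _ = ε * (2*π) := by rw [sub_zero, abs_of_pos (by positivity)]
      · intro x _
        rw [norm_mul, hnorm1]
        simpa using hδfb x
    refine norm_le_zero_iff.mp (le_of_forall_pos_le_add fun ε hε => ?_)
    have h1 := hbound (ε/(2*π+1)) (by positivity)
    have h2 : (ε/(2*π+1))*(2*π) ≤ ε := by
      rw [div_mul_eq_mul_div, div_le_iff₀ (by positivity)]
      nlinarith
    rw [zero_add]
    linarith

lemma coeff_eval (h : ℝ → ℂ) (n : ℤ) :
    haveI : Fact (0 < 2*π) := ⟨by positivity⟩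
    fourierCoeff (AddCircle.liftIco (2*π) 0 h) n
      = (1/(2*π) : ℝ) • ∫ t in (0:ℝ)..(2*π), Complex.exp (Complex.I * (-n) * t) * h t := by
  haveI : Fact (0 < 2*π) := ⟨by positivity⟩
  rw [fourierCoeff_eq_intervalIntegral _ n 0, zero_add]
  congr 1
  rw [intervalIntegral.integral_of_le (by positivity : (0:ℝ) ≤ 2*π),
    intervalIntegral.integral_of_le (by positivity : (0:ℝ) ≤ 2*π),
    integral_Ioc_eq_integral_Ioo, integral_Ioc_eq_integral_Ioo]
  apply setIntegral_congr_fun measurableSet_Ioo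
  intro x hx
  have hx' : x ∈ Ico (0:ℝ) (0 + 2*π) := by
    rw [zero_add]
    exact Ioo_subset_Ico_self hx
  simp only [AddCircle.liftIco_coe_apply hx', fourier_coe_apply, smul_eq_mul]
  congr 2
  push_cast
  have hπ : ((π:ℂ)) ≠ 0 := by exact_mod_cast Real.pi_ne_zero
  field_simp

lemma liftIco_conj (h : ℝ → ℂ) (x : AddCircle (2*π)) :
    haveI : Fact (0 < 2*π) := ⟨by positivity⟩
    (starRingEnd ℂ) (AddCircle.liftIco (2*π) 0 (fun t => (starRingEnd ℂ) (h t)) x)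
      = AddCircle.liftIco (2*π) 0 h x := by
  haveI : Fact (0 < 2*π) := ⟨by positivity⟩
  simp [AddCircle.liftIco, Function.comp]

lemma coeff_conj_eq (h : ℝ → ℂ) (n : ℤ) :
    haveI : Fact (0 < 2*π) := ⟨by positivity⟩
    (starRingEnd ℂ) (fourierCoeff
        (AddCircle.liftIco (2*π) 0 (fun t => (starRingEnd ℂ) (h t))) n)
      = fourierCoeff (AddCircle.liftIco (2*π) 0 h) (-n) := by
  haveI : Fact (0 < 2*π) := ⟨by positivity⟩
  rw [fourierCoeff, fourierCoeff, ← integral_conj]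
  apply MeasureTheory.integral_congr_ae
  filter_upwards with x
  rw [smul_eq_mul, smul_eq_mul, map_mul, neg_neg, liftIco_conj, fourier_neg, Complex.conj_conj]

lemma parseval_zero [hT : Fact (0 < 2*π)] (U W : C(AddCircle (2*π), ℂ))
    (hterm : ∀ i : ℤ, (starRingEnd ℂ) (fourierCoeff (⇑U) i) * fourierCoeff (⇑W) i = 0) :
    ∫ x : AddCircle (2*π), (starRingEnd ℂ) (U x) * W x ∂AddCircle.haarAddCircle = 0 := by
  set u2 := ContinuousMap.toLp (E := ℂ) 2 AddCircle.haarAddCircle ℂ U with hu2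
  set w2 := ContinuousMap.toLp (E := ℂ) 2 AddCircle.haarAddCircle ℂ W with hw2
  have hinner : (inner ℂ u2 w2 : ℂ) = 0 := by
    rw [← fourierBasis.repr.inner_map_map u2 w2, lp.inner_eq_tsum]
    have hterm' : ∀ i : ℤ,
        (inner ℂ ((fourierBasis.repr u2) i) ((fourierBasis.repr w2) i) : ℂ) = 0 := by
      intro i
      rw [fourierBasis_repr, fourierBasis_repr, hu2, hw2, fourierCoeff_toLp, fourierCoeff_toLp,
        RCLike.inner_apply']
      exact hterm i
    have h : (fun i : ℤ => (inner ℂ ((fourierBasis.repr u2) i) ((fourierBasis.repr w2) i) : ℂ))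
        = fun _ => (0:ℂ) := funext hterm'
    rw [h, tsum_zero]
  have hcongr : (∫ x : AddCircle (2*π), (starRingEnd ℂ) (U x) * W x ∂AddCircle.haarAddCircle)
      = ∫ a, (inner ℂ (u2 a) (w2 a) : ℂ) ∂AddCircle.haarAddCircle := by
    apply MeasureTheory.integral_congr_ae
    filter_upwards [ContinuousMap.coeFn_toLp (p := 2) (𝕜 := ℂ) AddCircle.haarAddCircle U,
      ContinuousMap.coeFn_toLp (p := 2) (𝕜 := ℂ) AddCircle.haarAddCircle W] with a h1 h2
    rw [RCLike.inner_apply', hu2, hw2, h1, h2]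
  rw [hcongr, ← MeasureTheory.L2.inner_def, hinner]

/-- **Analytic reciprocity law for the disk:** the Deligne–Beilinson pairing of the
boundary restrictions of two nonvanishing functions on the closed unit disk that are
holomorphic on the interior equals `1`. -/
theorem analytic_reciprocity_disk (F G : ℂ → ℂ)
    (hFcont : ContinuousOn F (Metric.closedBall 0 1))
    (hGcont : ContinuousOn G (Metric.closedBall 0 1))
    (hFdiff : DifferentiableOn ℂ F (Metric.ball 0 1))
    (hGdiff : DifferentiableOn ℂ G (Metric.ball 0 1))
    (hFne : ∀ z ∈ Metric.closedBall (0:ℂ) 1, F z ≠ 0)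
    (hGne : ∀ z ∈ Metric.closedBall (0:ℂ) 1, G z ≠ 0)
    (f g : ℝ → ℂ)
    (hfdef : ∀ t : ℝ, f t = F (Complex.exp (Complex.I * t)))
    (hgdef : ∀ t : ℝ, g t = G (Complex.exp (Complex.I * t)))
    (hf : ContDiff ℝ 1 f) (hg : ContDiff ℝ 1 g)
    (L : ℝ → ℂ) (hLc : Continuous L)
    (hL : ∀ t ∈ Set.Icc (0:ℝ) (2 * Real.pi), Complex.exp (L t) = f t) :
    Complex.exp ((1 / (2 * (Real.pi : ℂ) * Complex.I)) *
        ∫ t in (0:ℝ)..(2 * Real.pi), L t * (deriv g t / g t)) = 1 := by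
  have hπ : (0:ℝ) < π := Real.pi_pos
  haveI hT : Fact (0 < 2*π) := ⟨by positivity⟩
  have habs : ∀ t : ℝ, ‖Complex.exp (Complex.I * t)‖ = 1 := by
    intro t
    rw [show Complex.I * (t:ℂ) = (t:ℂ) * Complex.I by ring]
    exact Complex.norm_exp_ofReal_mul_I t
  have hmem1 : ∀ t : ℝ, Complex.exp (Complex.I * t) ∈ Metric.closedBall (0:ℂ) 1 := by
    intro t
    rw [Metric.mem_closedBall, dist_zero_right, habs]
  have hgne : ∀ t, g t ≠ 0 := fun t => by rw [hgdef t]; exact hGne _ (hmem1 t)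
  have hgd : ∀ t, HasDerivAt g (deriv g t) t :=
    fun t => ((hg.differentiable one_ne_zero) t).hasDerivAt
  have hgderivc : Continuous (deriv g) := hg.continuous_deriv le_rfl
  obtain ⟨M, hMc, hMd, hMexp⟩ := pathLog hgd hgderivc hgne
  -- boundary data for L and M
  obtain ⟨hLper, hLmom⟩ := boundary_log hFcont hFdiff hFne hLc
    (fun t ht => by rw [hL t ht, hfdef])
  obtain ⟨hMper, hMmom⟩ := boundary_log hGcont hGdiff hGne hMc
    (fun t ht => by rw [hMexp t, hgdef])
  set w : ℝ → ℂ := fun t => deriv g t / g t with hwdef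
  have hwc : Continuous w := hgderivc.div (hg.continuous) hgne
  -- moments of w = deriv g / g vanish for all n ≥ 0
  have hwmom : ∀ n : ℕ, (∫ t in (0:ℝ)..(2*π), w t * Complex.exp (Complex.I * n * t)) = 0 := by
    intro n
    rcases Nat.eq_zero_or_pos n with h0 | hpos
    · subst h0
      simp only [Nat.cast_zero, mul_zero, zero_mul, Complex.exp_zero, mul_one]
      have hFTC := intervalIntegral.integral_eq_sub_of_hasDerivAt
        (f := M) (f' := w) (fun t _ => hMd t) (hwc.intervalIntegrable 0 (2*π))
      rw [hFTC, hMper, sub_self]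
    · have hn : n ≠ 0 := hpos.ne'
      have hexpc : Continuous (fun t : ℝ => Complex.exp (Complex.I * n * t)) :=
        Complex.continuous_exp.comp (continuous_const.mul Complex.continuous_ofReal)
      have hprod : ∀ t : ℝ, HasDerivAt (fun s => M s * Complex.exp (Complex.I * n * s))
          (w t * Complex.exp (Complex.I * n * t)
            + M t * (Complex.exp (Complex.I * n * t) * (Complex.I * n))) t :=
        fun t => (hMd t).mul (hasDerivAt_expI n t)
      have hint1 : IntervalIntegrable (fun t => w t * Complex.exp (Complex.I * n * t))
          volume 0 (2*π) := (hwc.mul hexpc).intervalIntegrable _ _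
      have hint2 : IntervalIntegrable
          (fun t => M t * (Complex.exp (Complex.I * n * t) * (Complex.I * n)))
          volume 0 (2*π) := (hMc.mul (hexpc.mul continuous_const)).intervalIntegrable _ _
      have hFTC := intervalIntegral.integral_eq_sub_of_hasDerivAt
        (fun t _ => hprod t) (hint1.add hint2)
      rw [intervalIntegral.integral_add hint1 hint2] at hFTC
      have hbd : M (2*π) * Complex.exp (Complex.I * n * ((2*π:ℝ):ℂ))
          - M 0 * Complex.exp (Complex.I * n * ((0:ℝ):ℂ)) = 0 := by
        rw [exp_two_pi_n, hMper]
        norm_num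
      rw [hbd] at hFTC
      have h2 : (∫ t in (0:ℝ)..(2*π),
          M t * (Complex.exp (Complex.I * n * t) * (Complex.I * n))) = 0 := by
        have : (∫ t in (0:ℝ)..(2*π),
            M t * (Complex.exp (Complex.I * n * t) * (Complex.I * n)))
            = (∫ t in (0:ℝ)..(2*π), M t * Complex.exp (Complex.I * n * t)) * (Complex.I * n) := by
          rw [← intervalIntegral.integral_mul_const]
          apply intervalIntegral.integral_congr
          intro t _
          ring
        rw [this, hMmom n hn, zero_mul]
      rw [h2, add_zero] at hFTC
      linear_combination hFTC
  -- periodicity of w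
  have he2π1 : Complex.exp (Complex.I * ((2*π:ℝ):ℂ)) = 1 := by
    push_cast
    rw [show Complex.I * (2*(π:ℂ)) = 2*(π:ℂ)*Complex.I by ring, Complex.exp_two_pi_mul_I]
  have hgp : ∀ t : ℝ, g (t + 2*π) = g t := by
    intro t
    rw [hgdef, hgdef]
    congr 1
    push_cast
    rw [mul_add, Complex.exp_add]
    rw [show Complex.I * (2*(π:ℂ)) = 2*(π:ℂ)*Complex.I by ring, Complex.exp_two_pi_mul_I,
      mul_one]
  have hdgp : deriv g (2*π) = deriv g 0 := by
    have hfun : (fun x => g (x + 2*π)) = g := funext hgp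
    have h := deriv_comp_add_const g (2*π) 0
    rw [hfun, zero_add] at h
    exact h.symm
  have hwper : w 0 = w (2*π) := by
    rw [hwdef]
    simp only
    rw [hdgp, show g (2*π) = g 0 by rw [← zero_add (2*π), hgp]]
  -- set up the functions on the circle
  have hLper' : L 0 = L (2*π) := hLper.symm
  set UC : C(AddCircle (2*π), ℂ) :=
    ⟨AddCircle.liftIco (2*π) 0 (fun t => (starRingEnd ℂ) (L t)),
      AddCircle.liftIco_zero_continuous (by rw [hLper']) (Complex.continuous_conj.comp hLc).continuousOn⟩
    with hUC
  set WC : C(AddCircle (2*π), ℂ) :=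
    ⟨AddCircle.liftIco (2*π) 0 w,
      AddCircle.liftIco_zero_continuous hwper hwc.continuousOn⟩ with hWC
  -- term-by-term vanishing
  have hterm : ∀ i : ℤ, (starRingEnd ℂ) (fourierCoeff (⇑UC) i) * fourierCoeff (⇑WC) i = 0 := by
    intro i
    rcases le_or_gt 1 i with hi | hi
    · -- positive frequency: L-coefficient vanishes
      have h1 : (starRingEnd ℂ) (fourierCoeff (⇑UC) i)
          = fourierCoeff (AddCircle.liftIco (2*π) 0 L) (-i) := by
        rw [hUC]
        exact coeff_conj_eq L i
      rw [h1, coeff_eval]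
      simp only [Int.cast_neg, neg_neg]
      have hn0 : i.toNat ≠ 0 := by omega
      have hcast : ((i.toNat : ℕ) : ℂ) = (i : ℂ) := by
        have h' : ((i.toNat : ℕ) : ℤ) = i := Int.toNat_of_nonneg (by omega)
        exact_mod_cast congrArg (Int.cast : ℤ → ℂ) h'
      have hmatch : (∫ t in (0:ℝ)..(2*π), Complex.exp (Complex.I * i * t) * L t)
          = ∫ t in (0:ℝ)..(2*π), L t * Complex.exp (Complex.I * (i.toNat : ℕ) * t) := by
        apply intervalIntegral.integral_congr
        intro t _
        rw [hcast]
        ring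
      rw [hmatch, hLmom i.toNat hn0, smul_zero, zero_mul]
    · -- nonpositive frequency: w-coefficient vanishes
      have h2 : fourierCoeff (⇑WC) i = 0 := by
        rw [hWC]
        show fourierCoeff (AddCircle.liftIco (2*π) 0 w) i = 0
        rw [coeff_eval]
        have hcast : (((-i).toNat : ℕ) : ℂ) = ((-i : ℤ) : ℂ) := by
          have h' : (((-i).toNat : ℕ) : ℤ) = -i := Int.toNat_of_nonneg (by omega)
          exact_mod_cast congrArg (Int.cast : ℤ → ℂ) h'
        have hmatch : (∫ t in (0:ℝ)..(2*π), Complex.exp (Complex.I * (-i) * t) * w t)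
            = ∫ t in (0:ℝ)..(2*π), w t * Complex.exp (Complex.I * ((-i).toNat : ℕ) * t) := by
          apply intervalIntegral.integral_congr
          intro t _
          rw [hcast]
          push_cast
          ring
        rw [hmatch, hwmom (-i).toNat, smul_zero]
      rw [h2, mul_zero]
  have hzero := parseval_zero UC WC hterm
  -- rewrite the integrand as the lift of L * w
  have hlift : ∀ x : AddCircle (2*π), (starRingEnd ℂ) (UC x) * WC x
      = AddCircle.liftIco (2*π) 0 (fun t => L t * w t) x := by
    intro x
    rw [hUC, hWC]
    show (starRingEnd ℂ) (AddCircle.liftIco (2*π) 0 (fun t => (starRingEnd ℂ) (L t)) x)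
        * AddCircle.liftIco (2*π) 0 w x = _
    rw [liftIco_conj]
    simp [AddCircle.liftIco, Function.comp]
  have hzero2 : (∫ x : AddCircle (2*π),
      AddCircle.liftIco (2*π) 0 (fun t => L t * w t) x ∂AddCircle.haarAddCircle) = 0 := by
    rw [← hzero]
    exact MeasureTheory.integral_congr_ae (Filter.Eventually.of_forall fun x => (hlift x).symm)
  -- identify with the zeroth Fourier coefficient
  have hc0 : fourierCoeff (AddCircle.liftIco (2*π) 0 (fun t => L t * w t)) 0
      = (∫ x : AddCircle (2*π),
          AddCircle.liftIco (2*π) 0 (fun t => L t * w t) x ∂AddCircle.haarAddCircle) := by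
    rw [fourierCoeff]
    apply MeasureTheory.integral_congr_ae
    filter_upwards with x
    rw [neg_zero, fourier_zero, one_smul]
  have hc0' := coeff_eval (fun t => L t * w t) 0
  rw [hc0, hzero2] at hc0'
  simp only [Int.cast_zero, neg_zero, mul_zero, zero_mul, Complex.exp_zero, one_mul] at hc0'
  have hfinal : (∫ t in (0:ℝ)..(2*π), L t * w t) = 0 := by
    rcases smul_eq_zero.mp hc0'.symm with h | h
    · exact absurd h (by positivity)
    · exact h
  show Complex.exp ((1 / (2 * (Real.pi : ℂ) * Complex.I)) *
      ∫ t in (0:ℝ)..(2*π), L t * w t) = 1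
  rw [hfinal, mul_zero, Complex.exp_zero]
end

section
/- Let f, g : ℝ → ℂ be smooth, 2π-periodic, nowhere-vanishing functions, let L : ℝ → ℂ be a branch of log f on [0,2π], and let m ∈ ℤ satisfy ∫₀^{2π} f'(t)/f(t) dt = 2πi·m. Define the orientation-reversed functions f̌(t) := f(2π−t), ǧ(t) := g(2π−t), and Ľ(t) := L(2π−t). Then ∫₀^{2π} f̌'(t)/f̌(t) dt = 2πi·(−m), Ľ is a branch of log f̌ on [0,2π], and exp((1/(2πi)) ∫₀^{2π} Ľ(t)·ǧ'(t)/ǧ(t) dt) · ǧ(0)^{m} = (exp((1/(2πi)) ∫₀^{2π} L(t)·g'(t)/g(t) dt) · g(0)^{−m})^{−1}; that is, reversing the orientation of the circle inverts the Deligne–Beilinson pairing: T(f̌,ǧ) = T(f,g)^{−1}. -/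
/-- **Reversing the orientation of the circle inverts the Deligne–Beilinson pairing:**
`T(f̌, ǧ) = T(f, g)⁻¹`, where `f̌(t) = f(2π − t)`, `ǧ(t) = g(2π − t)`. Moreover the
winding number of `f̌` is `−m` and `Ľ(t) = L(2π − t)` is a branch of `log f̌` on `[0,2π]`. -/
theorem pairing_orientation_reversal (f g : ℝ → ℂ)
    (hf : ContDiff ℝ (⊤ : ℕ∞) f) (hg : ContDiff ℝ (⊤ : ℕ∞) g)
    (hfper : ∀ t : ℝ, f (t + 2 * Real.pi) = f t)
    (hgper : ∀ t : ℝ, g (t + 2 * Real.pi) = g t)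
    (hfne : ∀ t : ℝ, f t ≠ 0) (hgne : ∀ t : ℝ, g t ≠ 0)
    (L : ℝ → ℂ) (hLc : Continuous L)
    (hL : ∀ t ∈ Set.Icc (0:ℝ) (2 * Real.pi), Complex.exp (L t) = f t)
    (m : ℤ)
    (hm : ∫ t in (0:ℝ)..(2 * Real.pi), deriv f t / f t
      = 2 * (Real.pi : ℂ) * Complex.I * (m : ℂ))
    (fc gc Lc : ℝ → ℂ)
    (hfc : ∀ t : ℝ, fc t = f (2 * Real.pi - t))
    (hgc : ∀ t : ℝ, gc t = g (2 * Real.pi - t))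
    (hLcdef : ∀ t : ℝ, Lc t = L (2 * Real.pi - t)) :
    (∫ t in (0:ℝ)..(2 * Real.pi), deriv fc t / fc t
        = 2 * (Real.pi : ℂ) * Complex.I * ((-m : ℤ) : ℂ))
    ∧ (Continuous Lc
        ∧ ∀ t ∈ Set.Icc (0:ℝ) (2 * Real.pi), Complex.exp (Lc t) = fc t)
    ∧ Complex.exp ((1 / (2 * (Real.pi : ℂ) * Complex.I)) *
          ∫ t in (0:ℝ)..(2 * Real.pi), Lc t * (deriv gc t / gc t)) * gc 0 ^ (m : ℤ)
      = (Complex.exp ((1 / (2 * (Real.pi : ℂ) * Complex.I)) *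
          ∫ t in (0:ℝ)..(2 * Real.pi), L t * (deriv g t / g t)) * g 0 ^ (-m))⁻¹ := by
  have hfceq : fc = fun t => f (2 * Real.pi - t) := funext hfc
  have hgceq : gc = fun t => g (2 * Real.pi - t) := funext hgc
  have hLceq : Lc = fun t => L (2 * Real.pi - t) := funext hLcdef
  subst hfceq hgceq hLceq
  have hdf : ∀ t : ℝ, deriv (fun t => f (2 * Real.pi - t)) t
      = -deriv f (2 * Real.pi - t) := fun t => deriv_comp_const_sub f _ t
  have hdg : ∀ t : ℝ, deriv (fun t => g (2 * Real.pi - t)) t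
      = -deriv g (2 * Real.pi - t) := fun t => deriv_comp_const_sub g _ t
  refine ⟨?_, ⟨hLc.comp (by fun_prop), fun t ht => hL (2 * Real.pi - t)
    ⟨by linarith [ht.2], by linarith [ht.1]⟩⟩, ?_⟩
  · have : (∫ t in (0:ℝ)..(2 * Real.pi), deriv (fun t => f (2 * Real.pi - t)) t
        / f (2 * Real.pi - t))
        = ∫ t in (0:ℝ)..(2 * Real.pi), -(deriv f (2 * Real.pi - t) / f (2 * Real.pi - t)) := by
      apply intervalIntegral.integral_congr
      intro t _
      simp [hdf t, neg_div]
    rw [this, intervalIntegral.integral_neg,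
      intervalIntegral.integral_comp_sub_left (fun u => deriv f u / f u) (2 * Real.pi)]
    simp only [sub_self, sub_zero]
    rw [hm]
    push_cast
    ring
  · have key : (∫ t in (0:ℝ)..(2 * Real.pi), L (2 * Real.pi - t) *
        (deriv (fun t => g (2 * Real.pi - t)) t / g (2 * Real.pi - t)))
        = -∫ t in (0:ℝ)..(2 * Real.pi), L t * (deriv g t / g t) := by
      have : (∫ t in (0:ℝ)..(2 * Real.pi), L (2 * Real.pi - t) *
          (deriv (fun t => g (2 * Real.pi - t)) t / g (2 * Real.pi - t)))
          = ∫ t in (0:ℝ)..(2 * Real.pi),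
            -(L (2 * Real.pi - t) * (deriv g (2 * Real.pi - t) / g (2 * Real.pi - t))) := by
        apply intervalIntegral.integral_congr
        intro t _
        simp only [hdg]; ring
      rw [this, intervalIntegral.integral_neg,
        intervalIntegral.integral_comp_sub_left (fun u => L u * (deriv g u / g u)) (2 * Real.pi)]
      simp
    rw [key]
    have hg0 : (fun t => g (2 * Real.pi - t)) 0 = g 0 := by
      simp only [sub_zero, ← hgper 0, zero_add]
    rw [hg0, mul_inv, ← Complex.exp_neg, zpow_neg, inv_inv, mul_neg]
end

section
/- Let f, g : ℝ → ℂ be smooth, 2π-periodic, nowhere-vanishing functions, let L : ℝ → ℂ be a branch of log f on [0,2π], let m ∈ ℤ satisfy ∫₀^{2π} f'(t)/f(t) dt = 2πi·m, and let φ : ℝ → ℝ be a smooth function with φ(0) = 0, φ'(t) > 0 for all t, and φ(t+2π) = φ(t) + 2π for all t. Then ∫₀^{2π} (f∘φ)'(t)/(f∘φ)(t) dt = 2πi·m, L∘φ is a branch of log(f∘φ) on [0,2π], and exp((1/(2πi)) ∫₀^{2π} L(φ(t))·(g∘φ)'(t)/(g∘φ)(t) dt) · (g∘φ)(0)^{−m}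 = exp((1/(2πi)) ∫₀^{2π} L(t)·g'(t)/g(t) dt) · g(0)^{−m}; that is, the Deligne–Beilinson pairing is invariant under orientation-preserving reparametrizations of the circle: T(f∘φ, g∘φ) = T(f,g). -/
/-- **Invariance of the Deligne–Beilinson pairing under orientation-preserving
reparametrizations of the circle:** `T(f∘φ, g∘φ) = T(f, g)` for a smooth `φ : ℝ → ℝ`
with `φ(0) = 0`, `φ' > 0` and `φ(t + 2π) = φ(t) + 2π`. Moreover the winding number of
`f∘φ` is `m` and `L∘φ` is a branch of `log (f∘φ)` on `[0, 2π]`. -/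
theorem pairing_reparametrization_invariance (f g : ℝ → ℂ)
    (hf : ContDiff ℝ (⊤ : ℕ∞) f) (hg : ContDiff ℝ (⊤ : ℕ∞) g)
    (hfper : ∀ t : ℝ, f (t + 2 * Real.pi) = f t)
    (hgper : ∀ t : ℝ, g (t + 2 * Real.pi) = g t)
    (hfne : ∀ t : ℝ, f t ≠ 0) (hgne : ∀ t : ℝ, g t ≠ 0)
    (L : ℝ → ℂ) (hLc : Continuous L)
    (hL : ∀ t ∈ Set.Icc (0:ℝ) (2 * Real.pi), Complex.exp (L t) = f t)
    (m : ℤ)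
    (hm : ∫ t in (0:ℝ)..(2 * Real.pi), deriv f t / f t
      = 2 * (Real.pi : ℂ) * Complex.I * (m : ℂ))
    (φ : ℝ → ℝ) (hφ : ContDiff ℝ (⊤ : ℕ∞) φ) (hφ0 : φ 0 = 0)
    (hφ' : ∀ t : ℝ, 0 < deriv φ t)
    (hφper : ∀ t : ℝ, φ (t + 2 * Real.pi) = φ t + 2 * Real.pi) :
    (∫ t in (0:ℝ)..(2 * Real.pi), deriv (f ∘ φ) t / (f ∘ φ) t
        = 2 * (Real.pi : ℂ) * Complex.I * (m : ℂ))
    ∧ (Continuous (L ∘ φ)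
        ∧ ∀ t ∈ Set.Icc (0:ℝ) (2 * Real.pi), Complex.exp ((L ∘ φ) t) = (f ∘ φ) t)
    ∧ Complex.exp ((1 / (2 * (Real.pi : ℂ) * Complex.I)) *
          ∫ t in (0:ℝ)..(2 * Real.pi),
            L (φ t) * (deriv (g ∘ φ) t / (g ∘ φ) t)) * (g ∘ φ) 0 ^ (-m)
      = Complex.exp ((1 / (2 * (Real.pi : ℂ) * Complex.I)) *
          ∫ t in (0:ℝ)..(2 * Real.pi), L t * (deriv g t / g t)) * g 0 ^ (-m) := by
  have hfd : Differentiable ℝ f := hf.differentiable (by simp)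
  have hgd : Differentiable ℝ g := hg.differentiable (by simp)
  have hφd : Differentiable ℝ φ := hφ.differentiable (by simp)
  have hφmono : StrictMono φ := strictMono_of_deriv_pos hφ'
  have hφ2π : φ (2 * Real.pi) = 2 * Real.pi := by
    have := hφper 0; simpa [hφ0] using this
  have key : ∀ u : ℝ → ℂ, Continuous u →
      (∫ t in (0:ℝ)..(2 * Real.pi), deriv φ t • u (φ t))
        = ∫ t in (0:ℝ)..(2 * Real.pi), u t := by
    intro u hu
    have := intervalIntegral.integral_comp_smul_deriv
      (a := (0:ℝ)) (b := 2*Real.pi) (f := φ) (f' := deriv φ) (g := u)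
      (fun x _ => (hφd x).hasDerivAt) ((hφ.continuous_deriv (by simp)).continuousOn) hu
    simpa [hφ0, hφ2π, Function.comp] using this
  have hchainf : ∀ t, deriv (f ∘ φ) t = deriv φ t • deriv f (φ t) := fun t =>
    (HasDerivAt.scomp t ((hfd (φ t)).hasDerivAt) ((hφd t).hasDerivAt)).deriv
  have hchaing : ∀ t, deriv (g ∘ φ) t = deriv φ t • deriv g (φ t) := fun t =>
    (HasDerivAt.scomp t ((hgd (φ t)).hasDerivAt) ((hφd t).hasDerivAt)).deriv
  have hcf : Continuous fun s => deriv f s / f s :=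
    (hf.continuous_deriv (by simp)).div (hf.continuous) hfne
  have hcg : Continuous fun s => L s * (deriv g s / g s) :=
    hLc.mul ((hg.continuous_deriv (by simp)).div (hg.continuous) hgne)
  refine ⟨?_, ⟨hLc.comp hφ.continuous, ?_⟩, ?_⟩
  · have h1 : (∫ t in (0:ℝ)..(2 * Real.pi), deriv (f ∘ φ) t / (f ∘ φ) t)
        = ∫ t in (0:ℝ)..(2 * Real.pi), deriv φ t • (fun s => deriv f s / f s) (φ t) := by
      apply intervalIntegral.integral_congr
      intro t _
      simp only [Function.comp, hchainf t, Complex.real_smul, mul_div_assoc]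
    rw [h1, key _ hcf, hm]
  · intro t ht
    have h0 : (0:ℝ) ≤ φ t := by
      have := hφmono.monotone ht.1; simpa [hφ0] using this
    have h2 : φ t ≤ 2 * Real.pi := by
      have := hφmono.monotone ht.2; simpa [hφ2π] using this
    simpa [Function.comp] using hL (φ t) ⟨h0, h2⟩
  · have h1 : (∫ t in (0:ℝ)..(2 * Real.pi), L (φ t) * (deriv (g ∘ φ) t / (g ∘ φ) t))
        = ∫ t in (0:ℝ)..(2 * Real.pi),
            deriv φ t • (fun s => L s * (deriv g s / g s)) (φ t) := by
      apply intervalIntegral.integral_congr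
      intro t _
      simp only [Function.comp, hchaing t, Complex.real_smul, mul_div_assoc]
      ring
    rw [h1, key _ hcg]
    simp [Function.comp, hφ0]
end

section
/- Let R > 0, let u, v : ℂ → ℂ be complex-differentiable and nonvanishing on the open ball {z : |z| < R}, and let a, b ∈ ℤ. Define F(z) := z^a·u(z) and G(z) := z^b·v(z) for z ≠ 0. Fix 0 < r < R and set f(t) := F(r·exp(i·t)), g(t) := G(r·exp(i·t)); let L : ℝ → ℂ be a branch of log f on [0,2π] and let m ∈ ℤ satisfy ∫₀^{2π} f'(t)/f(t) dt = 2πi·m. Then m = a and exp((1/(2πi)) ∫₀^{2π} L(t)·g'(t)/g(t) dt) · g(0)^{−m} = (−1)^{a·b} · u(0)^{b} · v(0)^{−a}; that is, the Deligne–Beilinson pairing of F and G along a small counterclockwise circle around 0 equals the tame symbol (F,G)₀ = (−1)^{ν₀(F)ν₀(G)}·[F^{ν₀(G)}/G^{ν₀(F)}](0) of F and G at the point 0. -/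
/-!
On the disc `|z| < R` the nonvanishing functions `u` and `v` have holomorphic logarithms `ℓ` and
`κ`, so along `z = r e^{it}` the functions `f` and `g` have the continuous logarithms
`Φ(t) = a (log r + i t) + ℓ(z)` and `Ψ(t) = b (log r + i t) + κ(z)`. The winding number is
`(Φ(2π) - Φ(0)) / 2πi = a`, and the given branch `L` differs from `Φ` by a constant in `2πiℤ`,
which changes the exponent of `T` only by a multiple of `2πi`.

The integral `∫ Φ Ψ'` is bilinear in the two logarithms; its four pieces are an elementary
integral, an integration by parts against `t` followed by the mean value property of `κ`, the mean
value property `∫ ℓ(z) dt = 2π ℓ(0)`, and Cauchy's theorem `∮ ℓ κ' dz = 0`. Divided by `2πi`,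
the terms in `log r` and `κ(r)` cancel against `g(0)^{-a}`, leaving
`exp (πi ab + b ℓ(0) - a κ(0)) = (-1)^{ab} u(0)^b v(0)^{-a}`.
-/

open Complex Metric Set intervalIntegral
open scoped Real

theorem exists_log_of_differentiableOn_ball {c : ℂ} {R : ℝ} {φ : ℂ → ℂ}
    (hφ : DifferentiableOn ℂ φ (ball c R)) (hne : ∀ z ∈ ball c R, φ z ≠ 0) :
    ∃ ℓ : ℂ → ℂ, DifferentiableOn ℂ ℓ (ball c R) ∧ ∀ z ∈ ball c R, exp (ℓ z) = φ z := by
  rcases (ball c R).eq_empty_or_nonempty with hempty | ⟨z₀, hz₀⟩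
  · exact ⟨0, by simp [hempty], by simp [hempty]⟩
  obtain ⟨ℓ, hℓz₀, hℓ⟩ := ((hφ.deriv isOpen_ball).div hφ hne).isExactOn_ball.with_val_at z₀
    (log (φ z₀))
  have hℓd : DifferentiableOn ℂ ℓ (ball c R) := fun z hz ↦
    (hℓ z hz).differentiableAt.differentiableWithinAt
  have hq : ∀ z ∈ ball c R, HasDerivAt (fun w ↦ φ w * exp (-ℓ w)) 0 z := fun z hz ↦ by
    have hφz := (hφ.differentiableAt (isOpen_ball.mem_nhds hz)).hasDerivAt
    refine (hφz.mul (hℓ z hz).neg.cexp).congr_deriv ?_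
    simp only [Pi.div_apply, Pi.neg_apply]
    field_simp [hne z hz]
    ring
  refine ⟨ℓ, hℓd, fun z hz ↦ ?_⟩
  have hconst := isOpen_ball.is_const_of_deriv_eq_zero (convex_ball c R).isPreconnected
    (fun w hw ↦ (hq w hw).differentiableAt.differentiableWithinAt)
    (fun w hw ↦ (hq w hw).deriv) hz hz₀
  rw [hℓz₀, exp_neg, exp_neg, exp_log (hne z₀ hz₀), mul_inv_cancel₀ (hne z₀ hz₀),
    mul_inv_eq_one₀ (exp_ne_zero _)] at hconst
  exact hconst.symm

theorem exists_int_eqOn_add_of_eqOn_exp {X : Type*} [TopologicalSpace X] {s : Set X}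
    {L Φ : X → ℂ} (hs : IsPreconnected s) (hL : ContinuousOn L s) (hΦ : ContinuousOn Φ s)
    (h : EqOn (exp ∘ L) (exp ∘ Φ) s) :
    ∃ n : ℤ, EqOn L (fun x ↦ Φ x + n * (2 * π * I)) s := by
  rcases s.eq_empty_or_nonempty with rfl | ⟨x₀, hx₀⟩
  · exact ⟨0, eqOn_empty _ _⟩
  obtain ⟨n, hn⟩ := exp_eq_exp_iff_exists_int.mp (h hx₀)
  refine ⟨n, isCoveringMap_exp.eqOn_of_comp_eqOn hs hL
    (hΦ.add continuousOn_const) (fun x hx ↦ ?_) hx₀ hn⟩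
  simpa [exp_add] using h hx

noncomputable section Circle

variable {R r : ℝ}

theorem circleMap_mem_ball_of_abs_lt (c : ℂ) (hrR : |r| < R) (t : ℝ) :
    circleMap c r t ∈ ball c R :=
  sphere_subset_ball hrR (circleMap_mem_sphere' c r t)

theorem integral_comp_circleMap_eq {E : Type*} [NormedAddCommGroup E] [NormedSpace ℂ E]
    [CompleteSpace E] {c : ℂ} {φ : ℂ → E} (hφ : DifferentiableOn ℂ φ (ball c R))
    (hrR : |r| < R) :
    ∫ t in 0..2 * π, φ (circleMap c r t) = (2 * π) • φ c := by
  have hmean := (hφ.diffContOnCl_ball (closedBall_subset_ball hrR)).circleAverage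
  rwa [Real.circleAverage_def, inv_smul_eq_iff₀ (by positivity)] at hmean

theorem integral_comp_circleMap_mul_deriv_comp_circleMap_eq_zero {φ ψ : ℂ → ℂ}
    (hφ : DifferentiableOn ℂ φ (ball 0 R)) (hψ : DifferentiableOn ℂ ψ (ball 0 R))
    (hr : 0 ≤ r) (hrR : r < R) :
    ∫ t in 0..2 * π, φ (circleMap 0 r t) * (deriv ψ (circleMap 0 r t) * (circleMap 0 r t * I))
      = 0 := by
  have hcauchy := ((hφ.mul (hψ.deriv isOpen_ball)).diffContOnCl_ball
    (closedBall_subset_ball hrR)).circleIntegral_eq_zero hr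
  refine (integral_congr fun t _ ↦ ?_).trans hcauchy
  simp only [deriv_circleMap, smul_eq_mul, Pi.mul_apply]
  ring

def logCircleMap (r t : ℝ) : ℂ := Real.log r + t * I

theorem exp_logCircleMap (hr : 0 < r) (t : ℝ) : exp (logCircleMap r t) = circleMap 0 r t := by
  rw [logCircleMap, exp_add, ← ofReal_exp, Real.exp_log hr, circleMap_zero]

theorem hasDerivAt_logCircleMap (r t : ℝ) : HasDerivAt (logCircleMap r) I t := by
  have h := ((hasDerivAt_id t).ofReal_comp.mul_const I).const_add (Real.log r : ℂ)
  rwa [ofReal_one, one_mul] at h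

theorem continuous_logCircleMap (r : ℝ) : Continuous (logCircleMap r) :=
  continuous_iff_continuousAt.mpr fun t ↦ (hasDerivAt_logCircleMap r t).continuousAt

theorem logCircleMap_two_pi (r : ℝ) : logCircleMap r (2 * π) = logCircleMap r 0 + 2 * π * I := by
  simp [logCircleMap]

theorem integral_logCircleMap_mul_I (r : ℝ) :
    ∫ t in 0..2 * π, logCircleMap r t * I = 2 * π * I * (Real.log r + π * I) := by
  have hprim : ∀ t, HasDerivAt (fun s ↦ logCircleMap r s ^ 2 / 2) (logCircleMap r t * I) t :=
    fun t ↦ (((hasDerivAt_logCircleMap r t).pow 2).div_const 2).congr_deriv (by ring)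
  rw [integral_eq_sub_of_hasDerivAt (fun t _ ↦ hprim t)
    (((continuous_logCircleMap r).mul continuous_const).intervalIntegrable _ _),
    logCircleMap_two_pi]
  simp only [logCircleMap, ofReal_zero, zero_mul, add_zero]
  ring

theorem hasDerivAt_comp_circleMap {ψ : ℂ → ℂ} {t : ℝ}
    (hψ : DifferentiableAt ℂ ψ (circleMap 0 r t)) :
    HasDerivAt (fun s ↦ ψ (circleMap 0 r s))
      (deriv ψ (circleMap 0 r t) * (circleMap 0 r t * I)) t :=
  hψ.hasDerivAt.comp t (hasDerivAt_circleMap 0 r t)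

theorem continuous_deriv_comp_circleMap_mul {ψ : ℂ → ℂ} (hψ : DifferentiableOn ℂ ψ (ball 0 R))
    (hrR : |r| < R) :
    Continuous fun t ↦ deriv ψ (circleMap 0 r t) * (circleMap 0 r t * I) :=
  ((hψ.deriv isOpen_ball).continuousOn.comp_continuous (continuous_circleMap 0 r)
    (circleMap_mem_ball_of_abs_lt 0 hrR)).mul ((continuous_circleMap 0 r).mul continuous_const)

theorem integral_logCircleMap_mul_deriv_comp_circleMap {ψ : ℂ → ℂ}
    (hψ : DifferentiableOn ℂ ψ (ball 0 R)) (hrR : |r| < R) :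
    ∫ t in 0..2 * π, logCircleMap r t * (deriv ψ (circleMap 0 r t) * (circleMap 0 r t * I))
      = 2 * π * I * (ψ r - ψ 0) := by
  rw [integral_mul_deriv_eq_deriv_mul (fun t _ ↦ hasDerivAt_logCircleMap r t)
    (fun t _ ↦ hasDerivAt_comp_circleMap
      (hψ.differentiableAt (isOpen_ball.mem_nhds (circleMap_mem_ball_of_abs_lt 0 hrR t))))
    intervalIntegrable_const ((continuous_deriv_comp_circleMap_mul hψ hrR).intervalIntegrable _ _),
    integral_const_mul, integral_comp_circleMap_eq hψ hrR, logCircleMap_two_pi,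
    (periodic_circleMap 0 r).eq]
  simp only [circleMap, zero_add, ofReal_zero, zero_mul, exp_zero, mul_one, real_smul]
  push_cast
  ring

/-- A continuous logarithm of `z ^ a * exp (ℓ z)` along `z = circleMap 0 r t`. -/
def circleLog (a : ℤ) (ℓ : ℂ → ℂ) (r t : ℝ) : ℂ := a * logCircleMap r t + ℓ (circleMap 0 r t)

theorem exp_circleLog (hr : 0 < r) (a : ℤ) (ℓ : ℂ → ℂ) (t : ℝ) :
    exp (circleLog a ℓ r t) = circleMap 0 r t ^ a * exp (ℓ (circleMap 0 r t)) := by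
  rw [circleLog, exp_add, exp_int_mul, exp_logCircleMap hr]

theorem circleLog_two_pi (a : ℤ) (ℓ : ℂ → ℂ) (r : ℝ) :
    circleLog a ℓ r (2 * π) = circleLog a ℓ r 0 + 2 * π * I * a := by
  rw [circleLog, circleLog, logCircleMap_two_pi, (periodic_circleMap 0 r).eq]
  ring

variable {ℓ κ : ℂ → ℂ}

theorem hasDerivAt_circleLog (hℓ : DifferentiableOn ℂ ℓ (ball 0 R)) (hrR : |r| < R) (a : ℤ)
    (t : ℝ) :
    HasDerivAt (circleLog a ℓ r)
      (a * I + deriv ℓ (circleMap 0 r t) * (circleMap 0 r t * I)) t :=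
  ((hasDerivAt_logCircleMap r t).const_mul (a : ℂ)).add (hasDerivAt_comp_circleMap
    (hℓ.differentiableAt (isOpen_ball.mem_nhds (circleMap_mem_ball_of_abs_lt 0 hrR t))))

theorem continuous_circleLog (hℓ : DifferentiableOn ℂ ℓ (ball 0 R)) (hrR : |r| < R) (a : ℤ) :
    Continuous (circleLog a ℓ r) :=
  continuous_iff_continuousAt.mpr fun t ↦ (hasDerivAt_circleLog hℓ hrR a t).continuousAt

theorem deriv_circleLog (hℓ : DifferentiableOn ℂ ℓ (ball 0 R)) (hrR : |r| < R) (a : ℤ) :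
    deriv (circleLog a ℓ r)
      = fun t ↦ a * I + deriv ℓ (circleMap 0 r t) * (circleMap 0 r t * I) :=
  funext fun t ↦ (hasDerivAt_circleLog hℓ hrR a t).deriv

theorem continuous_deriv_circleLog (hℓ : DifferentiableOn ℂ ℓ (ball 0 R)) (hrR : |r| < R)
    (a : ℤ) : Continuous (deriv (circleLog a ℓ r)) := by
  rw [deriv_circleLog hℓ hrR a]
  exact continuous_const.add (continuous_deriv_comp_circleMap_mul hℓ hrR)

theorem integral_deriv_circleLog (hℓ : DifferentiableOn ℂ ℓ (ball 0 R)) (hrR : |r| < R)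
    (a : ℤ) :
    ∫ t in 0..2 * π, deriv (circleLog a ℓ r) t = 2 * π * I * a := by
  rw [integral_deriv_eq_sub (fun t _ ↦ (hasDerivAt_circleLog hℓ hrR a t).differentiableAt)
    ((continuous_deriv_circleLog hℓ hrR a).intervalIntegrable _ _), circleLog_two_pi,
    add_sub_cancel_left]

theorem integral_circleLog_mul_deriv_circleLog (hℓ : DifferentiableOn ℂ ℓ (ball 0 R))
    (hκ : DifferentiableOn ℂ κ (ball 0 R)) (hr : 0 ≤ r) (hrR : r < R) (a b : ℤ) :
    ∫ t in 0..2 * π, circleLog a ℓ r t * deriv (circleLog b κ r) t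
      = 2 * π * I * (a * b * (Real.log r + π * I) + a * (κ r - κ 0) + b * ℓ 0) := by
  have hrR' : |r| < R := by rwa [abs_of_nonneg hr]
  set D := fun t ↦ deriv κ (circleMap 0 r t) * (circleMap 0 r t * I)
  have hD : Continuous D := continuous_deriv_comp_circleMap_mul hκ hrR'
  set ℓw := fun t ↦ ℓ (circleMap 0 r t)
  have hℓw : Continuous ℓw :=
    hℓ.continuousOn.comp_continuous (continuous_circleMap 0 r)
      (circleMap_mem_ball_of_abs_lt 0 hrR')
  have hlog := continuous_logCircleMap r
  have hsplit : ∀ t, circleLog a ℓ r t * deriv (circleLog b κ r) t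
      = a * b * (logCircleMap r t * I) + a * (logCircleMap r t * D t)
        + b * I * ℓw t + ℓw t * D t := fun t ↦ by
    rw [deriv_circleLog hκ hrR', circleLog]
    ring
  have hlogD : ∫ t in 0..2 * π, logCircleMap r t * D t = 2 * π * I * (κ r - κ 0) :=
    integral_logCircleMap_mul_deriv_comp_circleMap hκ hrR'
  have hmean : ∫ t in 0..2 * π, ℓw t = (2 * π : ℝ) • ℓ 0 := integral_comp_circleMap_eq hℓ hrR'
  have hcauchy : ∫ t in 0..2 * π, ℓw t * D t = 0 :=
    integral_comp_circleMap_mul_deriv_comp_circleMap_eq_zero hℓ hκ hr hrR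
  clear_value D ℓw
  simp_rw [hsplit]
  rw [integral_add (Continuous.intervalIntegrable (by fun_prop) _ _)
      (Continuous.intervalIntegrable (by fun_prop) _ _),
    integral_add (Continuous.intervalIntegrable (by fun_prop) _ _)
      (Continuous.intervalIntegrable (by fun_prop) _ _),
    integral_add (Continuous.intervalIntegrable (by fun_prop) _ _)
      (Continuous.intervalIntegrable (by fun_prop) _ _),
    integral_const_mul, integral_const_mul, integral_const_mul, integral_logCircleMap_mul_I,
    hlogD, hmean, hcauchy, real_smul]
  push_cast
  ring

theorem logDeriv_exp_circleLog (hℓ : DifferentiableOn ℂ ℓ (ball 0 R)) (hrR : |r| < R) (a : ℤ)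
    (t : ℝ) : logDeriv (fun s ↦ exp (circleLog a ℓ r s)) t = deriv (circleLog a ℓ r) t := by
  rw [logDeriv_apply, deriv_cexp (hasDerivAt_circleLog hℓ hrR a t).differentiableAt,
    mul_div_cancel_left₀ _ (exp_ne_zero _)]

theorem exp_integral_circleLog_add_mul_deriv_circleLog (hℓ : DifferentiableOn ℂ ℓ (ball 0 R))
    (hκ : DifferentiableOn ℂ κ (ball 0 R)) (hr : 0 < r) (hrR : r < R) (a b n : ℤ) :
    exp ((1 / (2 * π * I)) *
        ∫ t in 0..2 * π, (circleLog a ℓ r t + n * (2 * π * I)) * deriv (circleLog b κ r) t)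
      * exp (circleLog b κ r 0) ^ (-a)
      = (-1) ^ (a * b) * exp (ℓ 0) ^ b * exp (κ 0) ^ (-a) := by
  have hrR' : |r| < R := by rwa [abs_of_pos hr]
  have hint : ∫ t in 0..2 * π, (circleLog a ℓ r t + n * (2 * π * I)) * deriv (circleLog b κ r) t
      = 2 * π * I * (a * b * (Real.log r + π * I) + a * (κ r - κ 0) + b * ℓ 0
        + n * b * (2 * π * I)) := by
    have hΦ := continuous_circleLog hℓ hrR' a
    have hΨ' := continuous_deriv_circleLog hκ hrR' b
    simp_rw [add_mul]
    rw [integral_add (Continuous.intervalIntegrable (by fun_prop) _ _)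
      (Continuous.intervalIntegrable (by fun_prop) _ _),
      integral_const_mul, integral_circleLog_mul_deriv_circleLog hℓ hκ hr.le hrR,
      integral_deriv_circleLog hκ hrR']
    ring
  rw [hint, ← exp_pi_mul_I, ← exp_int_mul, ← exp_int_mul, ← exp_int_mul, ← exp_int_mul,
    ← exp_add, ← exp_add, ← exp_add]
  refine exp_eq_exp_iff_exists_int.mpr ⟨n * b, ?_⟩
  simp only [circleLog, logCircleMap, circleMap, zero_add, ofReal_zero, zero_mul, exp_zero,
    mul_one]
  field_simp
  push_cast
  ring

end Circle

theorem pairing_equals_tame_symbol_general (R : ℝ)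
    (u v : ℂ → ℂ)
    (hu : DifferentiableOn ℂ u (Metric.ball 0 R))
    (hv : DifferentiableOn ℂ v (Metric.ball 0 R))
    (hune : ∀ z ∈ Metric.ball (0:ℂ) R, u z ≠ 0)
    (hvne : ∀ z ∈ Metric.ball (0:ℂ) R, v z ≠ 0)
    (a b : ℤ) (F G : ℂ → ℂ)
    (hF : ∀ z : ℂ, z ≠ 0 → F z = z ^ a * u z)
    (hG : ∀ z : ℂ, z ≠ 0 → G z = z ^ b * v z)
    (r : ℝ) (hr0 : 0 < r) (hrR : r < R)
    (f g : ℝ → ℂ)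
    (hfdef : ∀ t : ℝ, f t = F (r * Complex.exp (Complex.I * t)))
    (hgdef : ∀ t : ℝ, g t = G (r * Complex.exp (Complex.I * t)))
    (L : ℝ → ℂ) (hLc : Continuous L)
    (hL : ∀ t ∈ Set.Icc (0:ℝ) (2 * Real.pi), Complex.exp (L t) = f t)
    (m : ℤ)
    (hm : ∫ t in (0:ℝ)..(2 * Real.pi), deriv f t / f t
      = 2 * (Real.pi : ℂ) * Complex.I * (m : ℂ)) :
    m = a
    ∧ Complex.exp ((1 / (2 * (Real.pi : ℂ) * Complex.I)) *
          ∫ t in (0:ℝ)..(2 * Real.pi), L t * (deriv g t / g t)) * g 0 ^ (-m)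
      = (-1 : ℂ) ^ (a * b) * u 0 ^ b * v 0 ^ (-a) := by
  obtain ⟨ℓ, hℓ, hℓu⟩ := exists_log_of_differentiableOn_ball hu hune
  obtain ⟨κ, hκ, hκv⟩ := exists_log_of_differentiableOn_ball hv hvne
  have hrR' : |r| < R := by rwa [abs_of_pos hr0]
  have hf : f = fun t ↦ exp (circleLog a ℓ r t) := funext fun t ↦ by
    rw [hfdef, exp_circleLog hr0, hℓu _ (circleMap_mem_ball_of_abs_lt 0 hrR' t),
      ← hF _ (circleMap_ne_center hr0.ne'), circleMap_zero, mul_comm I]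
  have hg : g = fun t ↦ exp (circleLog b κ r t) := funext fun t ↦ by
    rw [hgdef, exp_circleLog hr0, hκv _ (circleMap_mem_ball_of_abs_lt 0 hrR' t),
      ← hG _ (circleMap_ne_center hr0.ne'), circleMap_zero, mul_comm I]
  have hfΦ : ∀ t, deriv f t / f t = deriv (circleLog a ℓ r) t := fun t ↦ by
    rw [hf]; exact logDeriv_exp_circleLog hℓ hrR' a t
  have hgΨ : ∀ t, deriv g t / g t = deriv (circleLog b κ r) t := fun t ↦ by
    rw [hg]; exact logDeriv_exp_circleLog hκ hrR' b t
  have hma : m = a := by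
    have hwind := (integral_congr fun t _ ↦ hfΦ t).trans (integral_deriv_circleLog hℓ hrR' a)
    exact_mod_cast mul_left_cancel₀ two_pi_I_ne_zero (hm.symm.trans hwind)
  obtain ⟨n, hn⟩ := exists_int_eqOn_add_of_eqOn_exp isPreconnected_Icc hLc.continuousOn
    (continuous_circleLog hℓ hrR' a).continuousOn fun t ht ↦ by simp [hL t ht, hf]
  refine ⟨hma, ?_⟩
  rw [integral_congr fun t ht ↦ by rw [hn (uIcc_of_le Real.two_pi_pos.le ▸ ht), hgΨ],
    hma, hg, ← hℓu 0 (mem_ball_self (hr0.trans hrR)), ← hκv 0 (mem_ball_self (hr0.trans hrR))]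
  exact exp_integral_circleLog_add_mul_deriv_circleLog hℓ hκ hr0 hrR a b n

/-- **The Deligne–Beilinson pairing along a small circle around `0` equals the tame
symbol:** for `F(z) = z^a·u(z)` and `G(z) = z^b·v(z)` with `u`, `v` holomorphic and
nonvanishing on `{|z| < R}`, the winding number of `f(t) = F(r·exp(it))` is `a` and
`T(f, g) = (−1)^{ab}·u(0)^b·v(0)^{−a}`. -/
theorem pairing_equals_tame_symbol (R : ℝ) (hR : 0 < R)
    (u v : ℂ → ℂ)
    (hu : DifferentiableOn ℂ u (Metric.ball 0 R))
    (hv : DifferentiableOn ℂ v (Metric.ball 0 R))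
    (hune : ∀ z ∈ Metric.ball (0:ℂ) R, u z ≠ 0)
    (hvne : ∀ z ∈ Metric.ball (0:ℂ) R, v z ≠ 0)
    (a b : ℤ) (F G : ℂ → ℂ)
    (hF : ∀ z : ℂ, z ≠ 0 → F z = z ^ a * u z)
    (hG : ∀ z : ℂ, z ≠ 0 → G z = z ^ b * v z)
    (r : ℝ) (hr0 : 0 < r) (hrR : r < R)
    (f g : ℝ → ℂ)
    (hfdef : ∀ t : ℝ, f t = F (r * Complex.exp (Complex.I * t)))
    (hgdef : ∀ t : ℝ, g t = G (r * Complex.exp (Complex.I * t)))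
    (L : ℝ → ℂ) (hLc : Continuous L)
    (hL : ∀ t ∈ Set.Icc (0:ℝ) (2 * Real.pi), Complex.exp (L t) = f t)
    (m : ℤ)
    (hm : ∫ t in (0:ℝ)..(2 * Real.pi), deriv f t / f t
      = 2 * (Real.pi : ℂ) * Complex.I * (m : ℂ)) :
    m = a
    ∧ Complex.exp ((1 / (2 * (Real.pi : ℂ) * Complex.I)) *
          ∫ t in (0:ℝ)..(2 * Real.pi), L t * (deriv g t / g t)) * g 0 ^ (-m)
      = (-1 : ℂ) ^ (a * b) * u 0 ^ b * v 0 ^ (-a) :=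
  pairing_equals_tame_symbol_general R u v hu hv hune hvne a b F G hF hG r hr0 hrR f g hfdef hgdef L
    hLc hL m hm
end
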